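/- arXiv:0710.2326 — 5 statements merged into one kernel-verified Lean document; each statement's English description precedes it below -/
import Mathlib

section
/- Let d ≥ 1 and let a₁,…,a_d, b₁,…,b_d be complex numbers such that the a_i are pairwise distinct, the b_j are pairwise distinct, and a_i ≠ b_j for all i, j. Fix 0 ≤ m ≤ d and a subset J ⊆ {1,…,d} with |J| = m. Then ∑_{I ⊆ {1,…,d}, |I| = m} R(I,J) = 1 and also ∑_{I ⊆ {1,…,d}, |I| = m} R(J,I) = 1, where R is the resultant expression defined in the context. -/
/-!
Apply Cauchy–Binet to `L * N`, where `L = (ℓ_i(b_j))_{j ∈ J, i}` is the matrix of the Lagrange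
basis polynomials for the nodes `a` evaluated at the `b_j`, `j ∈ J`, and `N = (a_i^k g(a_i))_{i, k}`
with `g = ∏_{j' ∉ J} (X - b_{j'})` and `k < m`. Since `X^k g` has degree `< d`, interpolation
gives `L * N = (b_j^k g(b_j))`, of determinant `∏_{j ∈ J} g(b_j) · V(b_J)`. In the minor of `L`
on the columns `I`, each `ℓ_i` splits as the Lagrange polynomial of `i` for the nodes `a_I`
times `∏_{i' ∉ I} (X - a_{i'}) / (a_i - a_{i'})`, so that minor is `V(b_J) / V(a_I)` up to
these row and column factors, while the minor of `N` is `∏_{i ∈ I} g(a_i) · V(a_I)`. Hence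
the `I`-th Cauchy–Binet term is `R(I,J) · det (L * N)`. The second identity is the first one
for the exchanged tuples.
-/

open Finset

/-- The resultant expression `R(I,J)` for the rational functions
`h_{IJ}(z) = ∏_{i∈I}(z−a_i)/∏_{j∈J}(z−b_j)` and `1/h_{I'J'}`. -/
noncomputable def resExpr (d : ℕ) (a b : Fin d → ℂ) (I J : Finset (Fin d)) : ℂ :=
  ((∏ i ∈ I, ∏ j' ∈ Jᶜ, (a i - b j')) * (∏ i' ∈ Iᶜ, ∏ j ∈ J, (b j - a i'))) /
    ((∏ i ∈ I, ∏ i' ∈ Iᶜ, (a i - a i')) * (∏ j ∈ J, ∏ j' ∈ Jᶜ, (b j - b j')))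

open Polynomial Matrix

-- Cauchy–Binet, read off from the basis of `⋀^m (n → R)` indexed by the `m`-subsets of `n`.
theorem Matrix.det_mul_eq_sum_det_submatrix {R n : Type*} [CommRing R] [Fintype n]
    [LinearOrder n] {m : ℕ} (A : Matrix (Fin m) n R) (B : Matrix n (Fin m) R) :
    (A * B).det = ∑ s : Set.powersetCard n m,
      (A.submatrix id (s.1.orderEmbOfFin s.2)).det *
        (B.submatrix (s.1.orderEmbOfFin s.2) id).det := by
  let rows : Fin m → n → R := fun i => A i
  let cols : Fin m → Module.Dual R (n → R) := fun k => LinearMap.proj k ∘ₗ B.vecMulLinear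
  have hAB : (A * B).det = exteriorPower.pairingDual R _ m (exteriorPower.ιMulti R m cols)
      (exteriorPower.ιMulti R m rows) := by
    rw [exteriorPower.pairingDual_ιMulti_ιMulti]
    rfl
  rw [hAB, ← ((Pi.basisFun R n).exteriorPower m).sum_repr (exteriorPower.ιMulti R m rows),
    map_sum]
  refine Fintype.sum_congr _ _ fun s => ?_
  rw [map_smul, exteriorPower.basis_repr_apply, exteriorPower.ιMultiDual_apply_ιMulti,
    exteriorPower.basis_apply, exteriorPower.ιMulti_family,
    exteriorPower.pairingDual_ιMulti_ιMulti, smul_eq_mul]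
  congr 2
  ext i k
  simp [cols, Set.powersetCard.ofFinEmbEquiv_symm_apply]

theorem Finset.prod_orderEmbOfFin {α M : Type*} [LinearOrder α] [CommMonoid M] (s : Finset α)
    {k : ℕ} (h : s.card = k) (f : α → M) : ∏ i, f (s.orderEmbOfFin h i) = ∏ x ∈ s, f x := by
  conv_rhs => rw [← map_orderEmbOfFin_univ s h, prod_map]
  rfl

def polyEvalMatrix {R ι κ : Type*} [CommRing R] (v : ι → R) (p : κ → R[X]) : Matrix ι κ R :=
  of fun i k => (p k).eval (v i)

theorem polyEvalMatrix_submatrix {R ι κ ι' κ' : Type*} [CommRing R] (v : ι → R)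
    (p : κ → R[X]) (f : ι' → ι) (g : κ' → κ) :
    (polyEvalMatrix v p).submatrix f g = polyEvalMatrix (v ∘ f) (p ∘ g) :=
  rfl

theorem vandermonde_eq_polyEvalMatrix {R : Type*} [CommRing R] {m : ℕ} (v : Fin m → R) :
    vandermonde v = polyEvalMatrix v fun k : Fin m => X ^ (k : ℕ) := by
  ext i k
  simp [polyEvalMatrix, vandermonde]

theorem det_polyEvalMatrix_X_pow_mul {R : Type*} [CommRing R] {m : ℕ} (v : Fin m → R)
    (g : R[X]) :
    (polyEvalMatrix v fun k : Fin m => X ^ (k : ℕ) * g).det =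
      (∏ i, g.eval (v i)) * (vandermonde v).det := by
  rw [← det_mul_column]
  congr 1
  ext i k
  simp [polyEvalMatrix, vandermonde, mul_comm]

section Lagrange

variable {F ι : Type*} [Field F] [Fintype ι] [DecidableEq ι]

theorem polyEvalMatrix_basis_mul {κ μ : Type*} {v : ι → F} (hv : Function.Injective v)
    (w : μ → F) (p : κ → F[X]) (hp : ∀ k, (p k).degree < Fintype.card ι) :
    polyEvalMatrix w (Lagrange.basis univ v) * polyEvalMatrix v p = polyEvalMatrix w p := by
  ext l k
  simp only [polyEvalMatrix, mul_apply, of_apply]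
  conv_rhs => rw [Lagrange.eq_interpolate hv.injOn (hp k), Lagrange.interpolate_apply]
  simp [eval_finsetSum, mul_comm]

theorem det_polyEvalMatrix_basis_mul_det_vandermonde {m : ℕ} {v : Fin m → F}
    (hv : Function.Injective v) (w : Fin m → F) :
    (polyEvalMatrix w (Lagrange.basis univ v)).det * (vandermonde v).det =
      (vandermonde w).det := by
  rw [← det_mul, vandermonde_eq_polyEvalMatrix, vandermonde_eq_polyEvalMatrix,
    polyEvalMatrix_basis_mul hv]
  intro k
  simp

theorem Lagrange.basis_univ_apply_embedding {κ : Type*} [Fintype κ] [DecidableEq κ]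
    (v : ι → F) (e : κ ↪ ι) (k : κ) :
    Lagrange.basis univ v (e k) = Lagrange.basis univ (v ∘ e) k *
      ∏ j ∈ (univ.map e)ᶜ, Lagrange.basisDivisor (v (e k)) (v j) := by
  have hsplit : univ.erase (e k) = ((univ.erase k).map e).disjUnion (univ.map e)ᶜ
      (disjoint_compl_right.mono_left (map_subset_map.2 (erase_subset _ _))) := by
    ext j
    by_cases hj : j ∈ univ.map e
    · obtain ⟨k', -, rfl⟩ := mem_map.1 hj
      simp
    · simp [hj, show j ≠ e k from fun h => hj (h ▸ mem_map_of_mem _ (mem_univ k))]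
  rw [Lagrange.basis, hsplit, prod_disjUnion, prod_map]
  rfl

theorem det_polyEvalMatrix_basis_embedding {m : ℕ} {v : ι → F} (hv : Function.Injective v)
    (e : Fin m ↪ ι) (w : Fin m → F) :
    (polyEvalMatrix w fun k => Lagrange.basis univ v (e k)).det * (vandermonde (v ∘ e)).det =
      (∏ k, ∏ j ∈ (univ.map e)ᶜ, (v (e k) - v j))⁻¹ *
        (∏ l, ∏ j ∈ (univ.map e)ᶜ, (w l - v j)) * (vandermonde w).det := by
  have hfactor : (polyEvalMatrix w fun k => Lagrange.basis univ v (e k)) =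
      of fun l k => (∏ j ∈ (univ.map e)ᶜ, (v (e k) - v j))⁻¹ *
        of (fun l k => (∏ j ∈ (univ.map e)ᶜ, (w l - v j)) *
          polyEvalMatrix w (Lagrange.basis univ (v ∘ e)) l k) l k := by
    ext l k
    simp [polyEvalMatrix, Lagrange.basis_univ_apply_embedding v e, Lagrange.basisDivisor,
      eval_prod, prod_mul_distrib, prod_inv_distrib]
    ring
  rw [hfactor, det_mul_row, det_mul_column, prod_inv_distrib, mul_assoc, mul_assoc,
    det_polyEvalMatrix_basis_mul_det_vandermonde (hv.comp e.injective), mul_assoc]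

end Lagrange

namespace ResultantIdentity

variable {d m : ℕ} {a b : Fin d → ℂ}

noncomputable def lagrangeMatrix (J : Finset (Fin d)) (hJ : J.card = m) (a b : Fin d → ℂ) :
    Matrix (Fin m) (Fin d) ℂ :=
  polyEvalMatrix (b ∘ J.orderEmbOfFin hJ) (Lagrange.basis univ a)

noncomputable def nodalMatrix (J : Finset (Fin d)) (m : ℕ) (a b : Fin d → ℂ) :
    Matrix (Fin d) (Fin m) ℂ :=
  polyEvalMatrix a fun k : Fin m => X ^ (k : ℕ) * Lagrange.nodal Jᶜ b

theorem prod_prod_sub_ne_zero {v : Fin d → ℂ} (hv : Function.Injective v)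
    (I : Finset (Fin d)) : ∏ i ∈ I, ∏ i' ∈ Iᶜ, (v i - v i') ≠ 0 :=
  prod_ne_zero_iff.2 fun _ hi => prod_ne_zero_iff.2 fun _ hi' =>
    sub_ne_zero.2 (hv.ne (ne_of_mem_of_not_mem hi (mem_compl.1 hi')))

theorem det_lagrangeMatrix_mul_nodalMatrix (ha : Function.Injective a) {J : Finset (Fin d)}
    (hJ : J.card = m) :
    (lagrangeMatrix J hJ a b * nodalMatrix J m a b).det =
      (∏ j ∈ J, ∏ j' ∈ Jᶜ, (b j - b j')) * (vandermonde (b ∘ J.orderEmbOfFin hJ)).det := by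
  rw [lagrangeMatrix, nodalMatrix, polyEvalMatrix_basis_mul ha, det_polyEvalMatrix_X_pow_mul]
  · simp only [Lagrange.eval_nodal, Function.comp_apply]
    rw [prod_orderEmbOfFin J hJ fun j => ∏ j' ∈ Jᶜ, (b j - b j')]
  · intro k
    have hdeg : (X ^ (k : ℕ) * Lagrange.nodal Jᶜ b).natDegree = k + (d - m) := by
      rw [natDegree_mul (by simp) Lagrange.nodal_ne_zero, natDegree_X_pow,
        Lagrange.natDegree_nodal, card_compl, hJ, Fintype.card_fin]
    have hmd : m ≤ d := by simpa [hJ] using J.card_le_univ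
    rw [Fintype.card_fin]
    exact degree_le_natDegree.trans_lt (by rw [hdeg]; exact_mod_cast (by omega))

theorem det_minor_mul_det_minor_eq_resExpr_mul (ha : Function.Injective a)
    (hb : Function.Injective b) {J : Finset (Fin d)} (hJ : J.card = m) {I : Finset (Fin d)}
    (hI : I.card = m) :
    ((lagrangeMatrix J hJ a b).submatrix id (I.orderEmbOfFin hI)).det *
        ((nodalMatrix J m a b).submatrix (I.orderEmbOfFin hI) id).det =
      resExpr d a b I J * (lagrangeMatrix J hJ a b * nodalMatrix J m a b).det := by
  have hnodal : ((nodalMatrix J m a b).submatrix (I.orderEmbOfFin hI) id).det =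
      (∏ i ∈ I, ∏ j' ∈ Jᶜ, (a i - b j')) * (vandermonde (a ∘ I.orderEmbOfFin hI)).det := by
    rw [nodalMatrix, polyEvalMatrix_submatrix, Function.comp_id, det_polyEvalMatrix_X_pow_mul]
    simp only [Lagrange.eval_nodal, Function.comp_apply]
    rw [prod_orderEmbOfFin I hI fun i => ∏ j' ∈ Jᶜ, (a i - b j')]
  have hlagrange : ((lagrangeMatrix J hJ a b).submatrix id (I.orderEmbOfFin hI)).det *
      (vandermonde (a ∘ I.orderEmbOfFin hI)).det =
        (∏ i ∈ I, ∏ i' ∈ Iᶜ, (a i - a i'))⁻¹ * (∏ j ∈ J, ∏ i' ∈ Iᶜ, (b j - a i')) *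
          (vandermonde (b ∘ J.orderEmbOfFin hJ)).det := by
    have h := det_polyEvalMatrix_basis_embedding ha (I.orderEmbOfFin hI).toEmbedding
      (b ∘ J.orderEmbOfFin hJ)
    simp only [map_orderEmbOfFin_univ, RelEmbedding.coe_toEmbedding, Function.comp_apply] at h
    rwa [prod_orderEmbOfFin I hI fun i => ∏ i' ∈ Iᶜ, (a i - a i'),
      prod_orderEmbOfFin J hJ fun j => ∏ i' ∈ Iᶜ, (b j - a i')] at h
  rw [det_lagrangeMatrix_mul_nodalMatrix ha hJ, hnodal, resExpr, prod_comm (s := Iᶜ),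
    mul_left_comm, hlagrange]
  field_simp [prod_prod_sub_ne_zero hb J]

theorem sum_resExpr_eq_one (ha : Function.Injective a) (hb : Function.Injective b)
    {J : Finset (Fin d)} (hJ : J.card = m) :
    ∑ I ∈ powersetCard m univ, resExpr d a b I J = 1 := by
  have hdet_ne : (lagrangeMatrix J hJ a b * nodalMatrix J m a b).det ≠ 0 := by
    rw [det_lagrangeMatrix_mul_nodalMatrix ha hJ]
    exact mul_ne_zero (prod_prod_sub_ne_zero hb J)
      (det_vandermonde_ne_zero_iff.2 (hb.comp (J.orderEmbOfFin hJ).injective))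
  have hcb := det_mul_eq_sum_det_submatrix (lagrangeMatrix J hJ a b) (nodalMatrix J m a b)
  rw [Fintype.sum_congr _ _ fun s => det_minor_mul_det_minor_eq_resExpr_mul ha hb hJ s.2,
    ← sum_mul, ← sum_subtype (powersetCard m univ) (by simp) fun I => resExpr d a b I J] at hcb
  exact (mul_eq_right₀ hdet_ne).1 hcb.symm

theorem resExpr_swap (a b : Fin d → ℂ) (I J : Finset (Fin d)) :
    resExpr d a b J I = resExpr d b a I J := by
  rw [resExpr, resExpr, prod_comm (s := J) (t := Iᶜ), prod_comm (s := Jᶜ) (t := I)]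
  ring

end ResultantIdentity

theorem resultant_identities_general (d : ℕ) (a b : Fin d → ℂ)
    (ha : Function.Injective a) (hb : Function.Injective b)
    (m : ℕ) (J : Finset (Fin d)) (hJ : J.card = m) :
    (∑ I ∈ Finset.powersetCard m (Finset.univ : Finset (Fin d)), resExpr d a b I J) = 1 ∧
    (∑ I ∈ Finset.powersetCard m (Finset.univ : Finset (Fin d)), resExpr d a b J I) = 1 := by
  refine ⟨ResultantIdentity.sum_resExpr_eq_one ha hb hJ, ?_⟩
  simp only [ResultantIdentity.resExpr_swap a b]
  exact ResultantIdentity.sum_resExpr_eq_one hb ha hJ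

/-- Resultant identities: for fixed `J` of cardinality `m`,
`∑_{|I|=m} R(I,J) = 1` and `∑_{|I|=m} R(J,I) = 1`. -/
theorem resultant_identities (d : ℕ) (hd : 1 ≤ d) (a b : Fin d → ℂ)
    (ha : Function.Injective a) (hb : Function.Injective b)
    (hab : ∀ i j, a i ≠ b j)
    (m : ℕ) (hm : m ≤ d) (J : Finset (Fin d)) (hJ : J.card = m) :
    (∑ I ∈ Finset.powersetCard m (Finset.univ : Finset (Fin d)), resExpr d a b I J) = 1 ∧
    (∑ I ∈ Finset.powersetCard m (Finset.univ : Finset (Fin d)), resExpr d a b J I) = 1 :=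
  resultant_identities_general d a b ha hb m J hJ
end

section
/- Let d ≥ 2 and let a₁,…,a_d, b₁,…,b_d be complex numbers such that a_i − a_{i'} is not an integer multiple of π for i ≠ i', b_j − b_{j'} is not an integer multiple of π for j ≠ j', and a_i − b_j is not an integer multiple of π for all i, j. Fix 0 ≤ m ≤ d and a subset J ⊆ {1,…,d} with |J| = m. Then ∑_{I ⊆ {1,…,d}, |I| = m} (∏_{i∈I} ∏_{j'∉J} sin(a_i − b_{j'}) · ∏_{i'∉I} ∏_{j∈J} sin(b_j − a_{i'})) / (∏_{i∈I} ∏_{i'∉I} sin(a_i − a_{i'}) · ∏_{j∈J} ∏_{j'∉J} sin(b_j − b_{j'})) = 1, where sin is the complex sine function. -/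
/-!
Put `x i = exp (2 a_i I)` and `y j = exp (2 b_j I)`. Since
`sin (u - v) = (2 I)⁻¹ e^{-uI} e^{-vI} (e^{2uI} - e^{2vI})` and, once `#I = #J`, every point
occurs equally often in the numerator and in the denominator of a summand, the scalar factors
cancel and the identity becomes the polynomial resultant identity
`∑_{#I = m} ∏_{I × Jᶜ} (x_i - y_j) ∏_{Iᶜ × J} (y_j - x_i) / ∏_{I × Iᶜ} (x_i - x_i')
  = ∏_{J × Jᶜ} (y_j - y_j')`.
Its left side is `resultantSum m G H x` with `G = ∏_{Jᶜ} (X - y_j)` and `H = ∏_J (y_j - X)`.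
For `deg G ≤ n - m` and `deg H ≤ m` this sum does not depend on the injective `x`: as a
function of one coordinate `x_k = s`, multiplied by `∏_{i ≠ k} (s - x_i)`, it is a polynomial of
degree `< n` vanishing at the other nodes `x_l` (the terms for `I` and for `I` with `k`, `l`
exchanged cancel), hence a constant multiple of that nodal polynomial. At `x = y` only `I = J`
contributes, and it gives the right side.
-/

open Finset Polynomial Lagrange Function

theorem Complex.sin_sub_eq_mul_exp (u v : ℂ) :
    sin (u - v) =
      (2 * I)⁻¹ * exp (-(u * I)) * exp (-(v * I)) * (exp (2 * u * I) - exp (2 * v * I)) := by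
  rw [sin, show -(u - v) * I = -(u * I) + -(v * I) + 2 * v * I by ring,
    show (u - v) * I = -(u * I) + -(v * I) + 2 * u * I by ring, exp_add, exp_add, exp_add, exp_add]
  field_simp
  ring_nf
  rw [I_sq]
  ring

theorem Complex.injective_exp_two_mul_mul_I {ι : Type*} {a : ι → ℂ}
    (ha : ∀ i i', i ≠ i' → ∀ k : ℤ, a i - a i' ≠ (k : ℂ) * (Real.pi : ℂ)) :
    Injective fun i => exp (2 * a i * I) := by
  intro i i' h
  by_contra hne
  have hsin : sin (a i - a i') = 0 := by
    rw [sin_sub_eq_mul_exp]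
    simp only at h
    rw [h, sub_self, mul_zero]
  obtain ⟨k, hk⟩ := sin_eq_zero_iff.1 hsin
  exact ha i i' hne k hk

theorem prod_prod_mul_mul_mul {α β M : Type*} [CommMonoid M] (s : Finset α) (t : Finset β)
    (r : M) (c : α → M) (c' : β → M) (g : α → β → M) :
    ∏ i ∈ s, ∏ j ∈ t, (r * c i * c' j * g i j) =
      r ^ (#s * #t) * (∏ i ∈ s, c i) ^ #t * (∏ j ∈ t, c' j) ^ #s *
        ∏ i ∈ s, ∏ j ∈ t, g i j := by
  simp only [prod_mul_distrib, prod_const, prod_pow, pow_mul']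

theorem Finset.map_swap_eq_insert_erase {ι : Type*} [DecidableEq ι] {I : Finset ι} {k l : ι}
    (hk : k ∈ I) (hl : l ∉ I) : I.map (Equiv.swap k l).toEmbedding = insert l (I.erase k) := by
  ext i
  rw [mem_map_equiv, Equiv.symm_swap, mem_insert, mem_erase, Equiv.swap_apply_def]
  grind

theorem exists_injective_forall_notMem {α β : Type*} [Fintype α] [Infinite β] {S : Set β}
    (hS : S.Finite) : ∃ w : α → β, Injective w ∧ ∀ a, w a ∉ S := by
  have : Infinite ↥Sᶜ := hS.infinite_compl.to_subtype
  exact ⟨fun a => (Infinite.natEmbedding ↥Sᶜ (Fintype.equivFin α a)).1,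
    Subtype.val_injective.comp ((Infinite.natEmbedding _).injective.comp
      (Fin.val_injective.comp (Fintype.equivFin α).injective)),
    fun a => (Infinite.natEmbedding ↥Sᶜ (Fintype.equivFin α a)).2⟩

namespace ResultantIdentity

variable {K ι : Type*} [Field K]

section Term

variable (G H : K[X]) (x : ι → K)

noncomputable def resultantTerm (I O : Finset ι) : K :=
  (∏ i ∈ I, G.eval (x i)) * (∏ o ∈ O, H.eval (x o)) / ∏ i ∈ I, ∏ o ∈ O, (x i - x o)

variable {G H x} [DecidableEq ι] {I O : Finset ι} {l : ι}

theorem resultantTerm_insert_left (hl : l ∉ I) :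
    resultantTerm G H x (insert l I) O =
      resultantTerm G H x I O * G.eval (x l) / ∏ o ∈ O, (x l - x o) := by
  simp only [resultantTerm, prod_insert hl]
  ring

theorem resultantTerm_insert_right (hl : l ∉ O) :
    resultantTerm G H x I (insert l O) =
      resultantTerm G H x I O * H.eval (x l) / ∏ i ∈ I, (x i - x l) := by
  simp only [resultantTerm, prod_insert hl, prod_mul_distrib]
  ring

theorem resultantTerm_update (hI : l ∉ I) (hO : l ∉ O) (s : K) :
    resultantTerm G H (update x l s) I O = resultantTerm G H x I O := by
  have hI' : ∀ i ∈ I, update x l s i = x i := fun i hi =>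
    update_of_ne (ne_of_mem_of_not_mem hi hI) _ _
  have hO' : ∀ o ∈ O, update x l s o = x o := fun o ho =>
    update_of_ne (ne_of_mem_of_not_mem ho hO) _ _
  unfold resultantTerm
  congr 1
  · congr 1
    · exact prod_congr rfl fun i hi => by rw [hI' i hi]
    · exact prod_congr rfl fun o ho => by rw [hO' o ho]
  · exact prod_congr rfl fun i hi => prod_congr rfl fun o ho => by rw [hI' i hi, hO' o ho]

end Term

variable [DecidableEq ι]

noncomputable def resultantSum [Fintype ι] (m : ℕ) (G H : K[X]) (x : ι → K) : K :=
  ∑ I ∈ powersetCard m univ, resultantTerm G H x I Iᶜ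

section Update

variable {m : ℕ} {G H : K[X]} {x : ι → K} {k : ι} {s : K} {I O : Finset ι}

theorem resultantTerm_update_insert_left (hI : k ∉ I) (hO : k ∉ O) :
    resultantTerm G H (update x k s) (insert k I) O =
      resultantTerm G H x I O * G.eval s / ∏ o ∈ O, (s - x o) := by
  rw [resultantTerm_insert_left hI, resultantTerm_update hI hO, update_self]
  congr 1
  exact prod_congr rfl fun o ho => by rw [update_of_ne (ne_of_mem_of_not_mem ho hO)]

theorem resultantTerm_update_insert_right (hI : k ∉ I) (hO : k ∉ O) :
    resultantTerm G H (update x k s) I (insert k O) =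
      resultantTerm G H x I O * H.eval s / ∏ i ∈ I, (x i - s) := by
  rw [resultantTerm_insert_right hO, resultantTerm_update hI hO, update_self]
  congr 1
  exact prod_congr rfl fun i hi => by rw [update_of_ne (ne_of_mem_of_not_mem hi hI)]

variable [Fintype ι]

theorem nodal_univ_erase (hk : k ∈ I) (x : ι → K) :
    nodal (univ.erase k) x = nodal (I.erase k) x * nodal Iᶜ x := by
  have hdisj : Disjoint (I.erase k) Iᶜ :=
    disjoint_left.2 fun i hi => by simpa using mem_of_mem_erase hi
  rw [nodal, nodal, nodal, ← prod_union hdisj]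
  congr 1
  ext i
  grind [mem_compl]

variable (G H x k) in
noncomputable def updateNumeratorTerm (I : Finset ι) : K[X] :=
  if k ∈ I then C (resultantTerm G H x (I.erase k) Iᶜ) * G * nodal (I.erase k) x
  else C ((-1) ^ #I * resultantTerm G H x I (Iᶜ.erase k)) * H * nodal (Iᶜ.erase k) x

theorem eval_updateNumeratorTerm (hs : ∀ j ≠ k, s ≠ x j) :
    (updateNumeratorTerm G H x k I).eval s =
      resultantTerm G H (update x k s) I Iᶜ * (nodal (univ.erase k) x).eval s := by
  by_cases hk : k ∈ I
  · have hkc : k ∉ Iᶜ := by simpa using hk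
    have hne : ∏ o ∈ Iᶜ, (s - x o) ≠ 0 :=
      prod_ne_zero_iff.2 fun o ho => sub_ne_zero.2 (hs o (ne_of_mem_of_not_mem ho hkc))
    have hterm := resultantTerm_update_insert_left (G := G) (H := H) (x := x) (s := s)
      (notMem_erase k I) hkc
    rw [insert_erase hk] at hterm
    rw [updateNumeratorTerm, if_pos hk, hterm, nodal_univ_erase hk]
    simp only [eval_mul, eval_C, eval_nodal]
    field_simp
  · have hkc : k ∈ Iᶜ := by simpa using hk
    have hne : ∏ i ∈ I, (x i - s) ≠ 0 :=
      prod_ne_zero_iff.2 fun i hi => sub_ne_zero.2 (hs i (ne_of_mem_of_not_mem hi hk)).symm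
    have hsign : ∏ i ∈ I, (s - x i) = (-1) ^ #I * ∏ i ∈ I, (x i - s) := by
      rw [← prod_neg]; simp
    have hterm := resultantTerm_update_insert_right (G := G) (H := H) (x := x) (s := s)
      hk (notMem_erase k Iᶜ)
    rw [insert_erase hkc] at hterm
    rw [updateNumeratorTerm, if_neg hk, hterm, nodal_univ_erase hkc, compl_compl]
    simp only [eval_mul, eval_C, eval_nodal, hsign]
    field_simp

theorem eval_updateNumeratorTerm_eq_zero {l : ι} (hlk : l ≠ k) (h : k ∈ I ↔ l ∈ I) :
    (updateNumeratorTerm G H x k I).eval (x l) = 0 := by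
  unfold updateNumeratorTerm
  split_ifs with hk
  · simp [eval_nodal_at_node (mem_erase.2 ⟨hlk, h.1 hk⟩)]
  · simp [eval_nodal_at_node (mem_erase.2 ⟨hlk, mem_compl.2 (mt h.2 hk)⟩)]

theorem eval_updateNumeratorTerm_add_eval_insert_erase {l : ι} (hx : Injective x)
    (hk : k ∈ I) (hl : l ∉ I) :
    (updateNumeratorTerm G H x k I).eval (x l) +
      (updateNumeratorTerm G H x k (insert l (I.erase k))).eval (x l) = 0 := by
  have hlk : l ≠ k := ne_of_mem_of_not_mem hk hl |>.symm
  have hlK : l ∉ I.erase k := fun h => hl (mem_of_mem_erase h)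
  have hkI' : k ∉ insert l (I.erase k) := by simp [hlk.symm]
  have hlL : l ∉ Iᶜ.erase l := notMem_erase l _
  have hcompl : (insert l (I.erase k))ᶜ.erase k = Iᶜ.erase l := by
    ext i; grind [mem_compl]
  have hPK : ∏ i ∈ I.erase k, (x i - x l) ≠ 0 :=
    prod_ne_zero_iff.2 fun i hi => sub_ne_zero.2 (hx.ne (ne_of_mem_of_not_mem hi hlK))
  have hPL : ∏ o ∈ Iᶜ.erase l, (x l - x o) ≠ 0 :=
    prod_ne_zero_iff.2 fun o ho => sub_ne_zero.2 (hx.ne (ne_of_mem_of_not_mem ho hlL).symm)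
  have hsign : ∏ i ∈ I.erase k, (x l - x i) =
      (-1) ^ #(I.erase k) * ∏ i ∈ I.erase k, (x i - x l) := by
    rw [← prod_neg]; simp
  have hcard : #(insert l (I.erase k)) = #(I.erase k) + 1 := card_insert_of_notMem hlK
  have hterm : resultantTerm G H x (I.erase k) Iᶜ =
      resultantTerm G H x (I.erase k) (Iᶜ.erase l) * H.eval (x l) /
        ∏ i ∈ I.erase k, (x i - x l) := by
    rw [← resultantTerm_insert_right hlL, insert_erase (mem_compl.2 hl)]
  rw [updateNumeratorTerm, if_pos hk, updateNumeratorTerm, if_neg hkI', hcompl, hcard, hterm,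
    resultantTerm_insert_left hlK]
  simp only [eval_mul, eval_C, eval_nodal, hsign]
  field_simp
  ring

variable (m G H x k) in
noncomputable def updateNumerator : K[X] :=
  ∑ I ∈ powersetCard m univ, updateNumeratorTerm G H x k I

theorem eval_updateNumerator (hs : ∀ j ≠ k, s ≠ x j) :
    (updateNumerator m G H x k).eval s =
      resultantSum m G H (update x k s) * (nodal (univ.erase k) x).eval s := by
  rw [updateNumerator, eval_finsetSum, resultantSum, sum_mul]
  exact sum_congr rfl fun I _ => eval_updateNumeratorTerm hs

theorem eval_updateNumerator_eq_zero {l : ι} (hx : Injective x) (hlk : l ≠ k) :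
    (updateNumerator m G H x k).eval (x l) = 0 := by
  set σ := (Equiv.swap k l).toEmbedding
  set f := fun I => (updateNumeratorTerm G H x k I).eval (x l)
  have hσk : ∀ I : Finset ι, k ∈ I.map σ ↔ l ∈ I := by simp [σ, mem_map_equiv]
  have hσl : ∀ I : Finset ι, l ∈ I.map σ ↔ k ∈ I := by simp [σ, mem_map_equiv]
  have hσσ : ∀ I : Finset ι, (I.map σ).map σ = I := by intro I; ext; simp [σ, mem_map_equiv]
  have hpair : ∀ I, k ∈ I → l ∉ I → f I + f (I.map σ) = 0 := fun I hk hl => by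
    rw [map_swap_eq_insert_erase hk hl]
    exact eval_updateNumeratorTerm_add_eval_insert_erase hx hk hl
  have hzero : ∀ I, (k ∈ I ↔ l ∈ I) → f I = 0 := fun I =>
    eval_updateNumeratorTerm_eq_zero hlk
  rw [updateNumerator, eval_finsetSum]
  refine sum_involution (fun I _ => I.map σ) (fun I _ => ?_) (fun I _ hfI hσI => hfI (hzero I ?_))
    (fun I hI => ?_) (fun I _ => hσσ I)
  · show f I + f (I.map σ) = 0
    by_cases hk : k ∈ I <;> by_cases hl : l ∈ I
    · rw [hzero I (iff_of_true hk hl),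
        hzero _ (iff_of_true ((hσk I).2 hl) ((hσl I).2 hk)), add_zero]
    · exact hpair I hk hl
    · rw [add_comm, ← hpair (I.map σ) ((hσk I).2 hl) (mt (hσl I).1 hk), hσσ]
    · rw [hzero I (iff_of_false hk hl),
        hzero _ (iff_of_false (mt (hσk I).1 hl) (mt (hσl I).1 hk)), add_zero]
  · rw [← hσl I, hσI]
  · simpa [mem_powersetCard] using hI

theorem natDegree_updateNumeratorTerm_le (hG : G.natDegree ≤ Fintype.card ι - #I)
    (hH : H.natDegree ≤ #I) :
    (updateNumeratorTerm G H x k I).natDegree ≤ Fintype.card ι - 1 := by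
  have hI : #I ≤ Fintype.card ι := card_le_univ I
  unfold updateNumeratorTerm
  split_ifs with hk
  · have hI1 : 1 ≤ #I := card_pos.2 ⟨k, hk⟩
    refine (natDegree_mul_le.trans
      (add_le_add_left ((natDegree_C_mul_le _ _).trans hG) _)).trans ?_
    rw [natDegree_nodal, card_erase_of_mem hk]
    omega
  · have hIc : 1 ≤ #Iᶜ := card_pos.2 ⟨k, mem_compl.2 hk⟩
    refine (natDegree_mul_le.trans
      (add_le_add_left ((natDegree_C_mul_le _ _).trans hH) _)).trans ?_
    rw [natDegree_nodal, card_erase_of_mem (mem_compl.2 hk)]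
    rw [card_compl] at hIc ⊢
    omega

theorem natDegree_updateNumerator_le (hG : G.natDegree ≤ Fintype.card ι - m)
    (hH : H.natDegree ≤ m) : (updateNumerator m G H x k).natDegree ≤ Fintype.card ι - 1 :=
  natDegree_sum_le_of_forall_le _ _ fun I hI => by
    obtain ⟨-, rfl⟩ := mem_powersetCard.1 hI
    exact natDegree_updateNumeratorTerm_le hG hH

theorem resultantSum_update (hG : G.natDegree ≤ Fintype.card ι - m) (hH : H.natDegree ≤ m)
    (hx : Injective x) (hs : ∀ j ≠ k, s ≠ x j) :
    resultantSum m G H (update x k s) = resultantSum m G H x := by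
  have hP : updateNumerator m G H x k = C (resultantSum m G H x) * nodal (univ.erase k) x := by
    refine sub_eq_zero.1 (eq_zero_of_natDegree_lt_card_of_eval_eq_zero _ hx (fun l => ?_) ?_)
    · rcases eq_or_ne l k with rfl | hlk
      · rw [eval_sub, eval_updateNumerator fun j hj => hx.ne hj.symm, update_eq_self, eval_mul,
          eval_C, sub_self]
      · rw [eval_sub, eval_updateNumerator_eq_zero hx hlk, eval_mul,
          eval_nodal_at_node (mem_erase.2 ⟨hlk, mem_univ l⟩), mul_zero, sub_zero]
    · have hcard : 0 < Fintype.card ι := Fintype.card_pos_iff.2 ⟨k⟩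
      have := natDegree_sub_le_of_le (natDegree_updateNumerator_le (x := x) (k := k) hG hH)
        ((natDegree_C_mul_le (resultantSum m G H x) _).trans_eq
          (natDegree_nodal (s := univ.erase k) (v := x)))
      rw [card_erase_of_mem (mem_univ k), card_univ] at this
      omega
  have hD : (nodal (univ.erase k) x).eval s ≠ 0 :=
    eval_nodal_not_at_node fun j hj => hs j (ne_of_mem_erase hj)
  apply mul_right_cancel₀ hD
  rw [← eval_updateNumerator hs, hP, eval_mul, eval_C]

end Update

section Identity

variable [Fintype ι] {m : ℕ} {G H : K[X]} {x w : ι → K}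

theorem resultantSum_piecewise (hG : G.natDegree ≤ Fintype.card ι - m) (hH : H.natDegree ≤ m)
    (hx : Injective x) (hw : Injective w) (hwx : ∀ i j, w i ≠ x j) (S : Finset ι) :
    resultantSum m G H (S.piecewise w x) = resultantSum m G H x := by
  induction S using Finset.induction_on with
  | empty => rw [piecewise_empty]
  | insert a S ha ih =>
    have hinj : Injective (S.piecewise w x) := by
      rw [← piecewise_coe, Set.injective_piecewise_iff]
      exact ⟨hw.injOn, hx.injOn, fun i _ j _ => hwx i j⟩
    rw [piecewise_insert, resultantSum_update hG hH hinj
      fun j hj => by by_cases hjS : j ∈ S <;> simp [hjS, hw.ne hj.symm, hwx], ih]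

theorem resultantSum_eq_of_injective [Infinite K] (hG : G.natDegree ≤ Fintype.card ι - m)
    (hH : H.natDegree ≤ m) {y : ι → K} (hx : Injective x) (hy : Injective y) :
    resultantSum m G H x = resultantSum m G H y := by
  -- Moving through a point `w` with coordinates fresh for both `x` and `y` keeps every
  -- intermediate point injective.
  obtain ⟨w, hw, hwxy⟩ :=
    exists_injective_forall_notMem (α := ι) ((Set.finite_range x).union (Set.finite_range y))
  have hwx : ∀ i j, w i ≠ x j := fun i j h => hwxy i (Or.inl ⟨j, h.symm⟩)
  have hwy : ∀ i j, w i ≠ y j := fun i j h => hwxy i (Or.inr ⟨j, h.symm⟩)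
  rw [← resultantSum_piecewise hG hH hx hw hwx univ,
    ← resultantSum_piecewise hG hH hy hw hwy univ, piecewise_univ, piecewise_univ]

theorem resultantSum_nodal_compl_self (J : Finset ι) (y : ι → K) :
    resultantSum #J (nodal Jᶜ y) (∏ j ∈ J, (C (y j) - X)) y =
      ∏ j ∈ J, ∏ j' ∈ Jᶜ, (y j - y j') := by
  rw [resultantSum, sum_eq_single_of_mem J (mem_powersetCard.2 ⟨subset_univ J, rfl⟩)]
  · simp only [resultantTerm, eval_nodal, eval_prod, eval_sub, eval_C, eval_X]
    rw [prod_comm (s := Jᶜ), mul_self_div_self]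
  · intro I hI hIJ
    obtain ⟨i, hiI, hiJ⟩ := not_subset.1 fun h =>
      hIJ (eq_of_subset_of_card_le h (mem_powersetCard.1 hI).2.ge)
    rw [resultantTerm, prod_eq_zero hiI (eval_nodal_at_node (mem_compl.2 hiJ)), zero_mul, zero_div]

theorem sum_prod_sub_div_eq_prod_sub [Infinite K] {y : ι → K} (hx : Injective x)
    (hy : Injective y) (J : Finset ι) :
    ∑ I ∈ powersetCard #J univ,
        (∏ i ∈ I, ∏ j ∈ Jᶜ, (x i - y j)) * (∏ i ∈ Iᶜ, ∏ j ∈ J, (y j - x i)) /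
          ∏ i ∈ I, ∏ i' ∈ Iᶜ, (x i - x i') =
      ∏ j ∈ J, ∏ j' ∈ Jᶜ, (y j - y j') := by
  have hG : (nodal Jᶜ y).natDegree ≤ Fintype.card ι - #J := by rw [natDegree_nodal, card_compl]
  have hH : (∏ j ∈ J, (C (y j) - X)).natDegree ≤ #J := by
    refine (natDegree_prod_le _ _).trans
      ((sum_le_card_nsmul _ _ 1 fun j _ => ?_).trans (by simp))
    rw [← neg_sub, natDegree_neg, natDegree_X_sub_C]
  rw [← resultantSum_nodal_compl_self, ← resultantSum_eq_of_injective hG hH hx hy]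
  simp only [resultantSum, resultantTerm, eval_nodal, eval_prod, eval_sub, eval_C, eval_X]

end Identity

section Gauge

variable [Fintype ι] {α : Type*}

theorem summand_eq_of_eq_mul_mul_mul_sub {f : α → α → K} {E c : α → K} {r : K}
    (hr : r ≠ 0) (hc : ∀ u, c u ≠ 0) (hf : ∀ u v, f u v = r * c u * c v * (E u - E v))
    (a b : ι → α) {I J : Finset ι} (hIJ : #I = #J) :
    (∏ i ∈ I, ∏ j ∈ Jᶜ, f (a i) (b j)) * (∏ i ∈ Iᶜ, ∏ j ∈ J, f (b j) (a i)) /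
        ((∏ i ∈ I, ∏ i' ∈ Iᶜ, f (a i) (a i')) *
          ∏ j ∈ J, ∏ j' ∈ Jᶜ, f (b j) (b j')) =
      (∏ i ∈ I, ∏ j ∈ Jᶜ, (E (a i) - E (b j))) *
          (∏ i ∈ Iᶜ, ∏ j ∈ J, (E (b j) - E (a i))) /
        (∏ i ∈ I, ∏ i' ∈ Iᶜ, (E (a i) - E (a i'))) /
          ∏ j ∈ J, ∏ j' ∈ Jᶜ, (E (b j) - E (b j')) := by
  have hIJc : #Iᶜ = #Jᶜ := by rw [card_compl, card_compl, hIJ]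
  simp only [hf, prod_comm (s := Iᶜ) (t := J)]
  rw [prod_prod_mul_mul_mul, prod_prod_mul_mul_mul, prod_prod_mul_mul_mul,
    prod_prod_mul_mul_mul, hIJ, hIJc]
  have hL : r ^ (#J * #Jᶜ) * r ^ (#J * #Jᶜ) * (∏ i ∈ I, c (a i)) ^ #Jᶜ *
      (∏ i ∈ Iᶜ, c (a i)) ^ #J * (∏ j ∈ J, c (b j)) ^ #Jᶜ *
        (∏ j ∈ Jᶜ, c (b j)) ^ #J ≠ 0 := by
    simp [hr, hc, prod_eq_zero_iff]
  rw [div_div, eq_comm, ← mul_div_mul_left _ _ hL]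
  ring

end Gauge

end ResultantIdentity

open ResultantIdentity

theorem trigonometric_resultant_identity_general (d : ℕ) (a b : Fin d → ℂ)
    (ha : ∀ i i', i ≠ i' → ∀ k : ℤ, a i - a i' ≠ (k : ℂ) * (Real.pi : ℂ))
    (hb : ∀ j j', j ≠ j' → ∀ k : ℤ, b j - b j' ≠ (k : ℂ) * (Real.pi : ℂ))
    (m : ℕ) (J : Finset (Fin d)) (hJ : J.card = m) :
    ∑ I ∈ Finset.powersetCard m (Finset.univ : Finset (Fin d)),
      ((∏ i ∈ I, ∏ j' ∈ Jᶜ, Complex.sin (a i - b j')) *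
        (∏ i' ∈ Iᶜ, ∏ j ∈ J, Complex.sin (b j - a i'))) /
      ((∏ i ∈ I, ∏ i' ∈ Iᶜ, Complex.sin (a i - a i')) *
        (∏ j ∈ J, ∏ j' ∈ Jᶜ, Complex.sin (b j - b j'))) = 1 := by
  subst hJ
  have hy := Complex.injective_exp_two_mul_mul_I hb
  rw [sum_congr rfl fun I hI =>
      summand_eq_of_eq_mul_mul_mul_sub (f := fun u v => Complex.sin (u - v))
        (inv_ne_zero (mul_ne_zero two_ne_zero Complex.I_ne_zero)) (fun u => Complex.exp_ne_zero _)
        Complex.sin_sub_eq_mul_exp a b (mem_powersetCard.1 hI).2,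
    ← sum_div, sum_prod_sub_div_eq_prod_sub (Complex.injective_exp_two_mul_mul_I ha) hy J,
    div_self]
  exact prod_ne_zero_iff.2 fun j hj => prod_ne_zero_iff.2 fun j' hj' =>
    sub_ne_zero.2 (hy.ne (ne_of_mem_of_not_mem hj (mem_compl.1 hj')))

/-- Trigonometric resultant identities: for fixed `J` of cardinality `m`,
the sum over all `I` of cardinality `m` of the sine cross-ratio products equals `1`. -/
theorem trigonometric_resultant_identity (d : ℕ) (hd : 2 ≤ d) (a b : Fin d → ℂ)
    (ha : ∀ i i', i ≠ i' → ∀ k : ℤ, a i - a i' ≠ (k : ℂ) * (Real.pi : ℂ))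
    (hb : ∀ j j', j ≠ j' → ∀ k : ℤ, b j - b j' ≠ (k : ℂ) * (Real.pi : ℂ))
    (hab : ∀ i j, ∀ k : ℤ, a i - b j ≠ (k : ℂ) * (Real.pi : ℂ))
    (m : ℕ) (hm : m ≤ d) (J : Finset (Fin d)) (hJ : J.card = m) :
    ∑ I ∈ Finset.powersetCard m (Finset.univ : Finset (Fin d)),
      ((∏ i ∈ I, ∏ j' ∈ Jᶜ, Complex.sin (a i - b j')) *
        (∏ i' ∈ Iᶜ, ∏ j ∈ J, Complex.sin (b j - a i'))) /
      ((∏ i ∈ I, ∏ i' ∈ Iᶜ, Complex.sin (a i - a i')) *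
        (∏ j ∈ J, ∏ j' ∈ Jᶜ, Complex.sin (b j - b j'))) = 1 :=
  trigonometric_resultant_identity_general d a b ha hb m J hJ
end

section
/- Let r > 0 and let z, w ∈ ℂ with |z| > r and |w| > r. Then exp( −(1/π) ∫_{{ζ ∈ ℂ : |ζ| < r}} 1/((ζ − z) · conj(ζ − w)) dA(ζ) ) = 1 − r²/(z · conj(w)), where dA denotes the Lebesgue area measure on ℂ. Equivalently, the exponential transform of the disk 𝔻(0,r) is E_{𝔻(0,r)}(z,w) = 1 − r²/(z·w̄) for z, w outside the closed disk. -/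
/-!
Polar coordinates turn the area integral into `2π ∫₀^r ρ · (average over the circle of radius ρ)`.
On `|ζ| = ρ` one has `conj ζ = ρ² / ζ`, so the circle average is a contour integral with a
single pole inside, at `ρ² / conj w`, and Cauchy's formula gives `(z w̄ - ρ²)⁻¹`. The remaining
radial integral is `-log (1 - r² / (z w̄)) / 2`.
-/

open MeasureTheory

/-- The exponential transform of a bounded open set `Ω ⊆ ℂ`:
`E_Ω(z,w) = exp(−(1/π) ∫_Ω 1/((ζ−z)·conj(ζ−w)) dA(ζ))`. -/
noncomputable def expTransform (Ω : Set ℂ) (z w : ℂ) : ℂ :=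
  Complex.exp (-(1 / (Real.pi : ℂ)) *
    ∫ ζ in Ω, ((ζ - z) * (starRingEnd ℂ) (ζ - w))⁻¹)

open Metric Set Real Complex ComplexConjugate

theorem Complex.polarCoord_symm_eq_circleMap (p : ℝ × ℝ) :
    Complex.polarCoord.symm p = circleMap 0 p.1 p.2 := by
  simp [circleMap, Complex.exp_mul_I]

theorem integral_ball_zero_eq_intervalIntegral_circleAverage {E : Type*} [NormedAddCommGroup E]
    [NormedSpace ℝ E] {f : ℂ → E} {r : ℝ} (hr : 0 ≤ r) (hf : ContinuousOn f (closedBall 0 r)) :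
    ∫ ζ in ball 0 r, f ζ = (2 * π) • ∫ ρ in 0..r, ρ • circleAverage f 0 ρ := by
  set S : Set (ℝ × ℝ) := Ioo 0 r ×ˢ Ioo (-π) π
  have hpolar : ∫ ζ in ball 0 r, f ζ = ∫ p in S, p.1 • f (circleMap 0 p.1 p.2) := by
    rw [← integral_indicator measurableSet_ball, ← Complex.integral_comp_polarCoord_symm,
      ← integral_indicator (measurableSet_Ioo.prod measurableSet_Ioo),
      ← integral_indicator polarCoord.open_target.measurableSet]
    congr 1 with ⟨ρ, θ⟩
    simp only [Complex.polarCoord_symm_eq_circleMap]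
    by_cases hρ : 0 < ρ
    · by_cases hρr : ρ < r <;> simp [polarCoord_target, indicator, abs_of_pos hρ, hρ, hρr]
    · simp [polarCoord_target, indicator, hρ]
  have hint : IntegrableOn (fun p : ℝ × ℝ => p.1 • f (circleMap 0 p.1 p.2)) S := by
    refine (ContinuousOn.integrableOn_compact (isCompact_Icc.prod isCompact_Icc) ?_).mono_set
      (prod_mono Ioo_subset_Icc_self Ioo_subset_Icc_self)
    refine continuousOn_fst.smul (hf.comp (by fun_prop) fun p hp => ?_)
    simpa [abs_of_nonneg hp.1.1] using hp.1.2
  rw [hpolar, Measure.volume_eq_prod, setIntegral_prod _ hint,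
    intervalIntegral.integral_of_le hr, ← integral_Ioc_eq_integral_Ioo, ← integral_smul]
  refine setIntegral_congr_fun measurableSet_Ioc fun ρ _ => ?_
  rw [integral_smul, circleAverage_eq_integral_add (-π),
    intervalIntegral.integral_comp_add_right (fun θ => f (circleMap 0 ρ θ)),
    ← integral_Ioc_eq_integral_Ioo, ← intervalIntegral.integral_of_le (by linarith [pi_pos]),
    smul_comm ρ, smul_inv_smul₀ (by positivity)]
  ring_nf

theorem circleAverage_inv_mul_conj {z w : ℂ} {ρ : ℝ} (hz : |ρ| < ‖z‖) (hw : |ρ| < ‖w‖) :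
    circleAverage (fun ζ => ((ζ - z) * conj (ζ - w))⁻¹) 0 ρ = (z * conj w - ρ ^ 2)⁻¹ := by
  wlog hρ : 0 < ρ generalizing ρ
  · rcases (abs_nonneg ρ).eq_or_lt with h | h
    · simp [abs_eq_zero.mp h.symm]
    · have := this (ρ := |ρ|) (by rwa [abs_abs]) (by rwa [abs_abs]) h
      rwa [circleAverage_abs_radius, ← ofReal_pow, sq_abs, ofReal_pow] at this
  rw [abs_of_pos hρ] at hz hw
  have hw0 : conj w ≠ 0 := by simpa using (hρ.trans hw).ne'
  set b : ℂ := ρ ^ 2 / conj w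
  have hb : b ∈ ball 0 ρ := by
    rw [mem_ball_zero_iff, norm_div, norm_conj, norm_pow, norm_real, norm_of_nonneg hρ.le,
      div_lt_iff₀ (hρ.trans hw)]
    nlinarith
  have hdiff : DifferentiableOn ℂ (fun ζ => (conj w * (z - ζ))⁻¹) (closedBall 0 ρ) := by
    refine DifferentiableOn.inv (by fun_prop) fun ζ hζ => mul_ne_zero hw0 (sub_ne_zero.2 ?_)
    rintro rfl
    exact (mem_closedBall_zero_iff.1 hζ).not_gt hz
  have hsphere : EqOn (fun ζ => (ζ - 0)⁻¹ • ((ζ - z) * conj (ζ - w))⁻¹)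
      (fun ζ => (ζ - b)⁻¹ • (conj w * (z - ζ))⁻¹) (sphere 0 ρ) := by
    intro ζ hζ
    have hζ0 : ζ ≠ 0 := ne_zero_of_norm_ne_zero (by rw [mem_sphere_zero_iff_norm.1 hζ]; exact hρ.ne')
    have hconj : conj ζ = ρ ^ 2 / ζ := by
      rw [eq_div_iff hζ0, mul_comm, mul_conj, normSq_eq_norm_sq, mem_sphere_zero_iff_norm.1 hζ]
      push_cast; ring
    simp only [smul_eq_mul, map_sub, hconj, b]
    field_simp
    ring
  rw [circleAverage_eq_circleIntegral hρ.ne', circleIntegral.integral_congr hρ.le hsphere,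
    hdiff.circleIntegral_sub_inv_smul hb, inv_smul_smul₀ (by simp [pi_ne_zero]), mul_sub, mul_div_cancel₀ _ hw0, mul_comm]

theorem norm_ofReal_sq_div_lt_one {c : ℂ} {ρ : ℝ} (h : ρ ^ 2 < ‖c‖) :
    ‖(ρ : ℂ) ^ 2 / c‖ < 1 := by
  rw [norm_div, ← ofReal_pow, norm_real, norm_of_nonneg (sq_nonneg ρ),
    div_lt_one ((sq_nonneg ρ).trans_lt h)]
  exact h

theorem intervalIntegral_smul_inv_sub_sq {c : ℂ} {r : ℝ} (hr : r ^ 2 < ‖c‖) :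
    ∫ ρ in 0..r, ρ • (c - (ρ : ℂ) ^ 2)⁻¹ = -Complex.log (1 - (r : ℂ) ^ 2 / c) / 2 := by
  have hc : c ≠ 0 := norm_pos_iff.1 ((sq_nonneg r).trans_lt hr)
  have hsq : ∀ ρ ∈ uIcc 0 r, ‖(ρ : ℂ) ^ 2 / c‖ < 1 := fun ρ hρ => by
    have : ρ ^ 2 ≤ r ^ 2 := by rcases mem_uIcc.1 hρ with h | h <;> nlinarith [h.1, h.2]
    exact norm_ofReal_sq_div_lt_one (this.trans_lt hr)
  have hderiv : ∀ ρ ∈ uIcc 0 r, HasDerivAt (fun t : ℝ => -Complex.log (1 - (t : ℂ) ^ 2 / c) / 2)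
      (ρ • (c - (ρ : ℂ) ^ 2)⁻¹) ρ := fun ρ hρ => by
    have hslit : 1 - (ρ : ℂ) ^ 2 / c ∈ slitPlane := by
      simpa [sub_eq_add_neg] using mem_slitPlane_of_norm_lt_one (z := -((ρ : ℂ) ^ 2 / c))
        (by rw [norm_neg]; exact hsq ρ hρ)
    have hlog := ((((hasDerivAt_id ρ).ofReal_comp.pow 2).div_const c).const_sub 1).clog_real hslit
    refine (hlog.neg.div_const 2).congr_deriv ?_
    simp only [Pi.pow_apply, id, ofReal_one, real_smul]
    field_simp
    push_cast
    ring
  have hcont : ContinuousOn (fun ρ : ℝ => ρ • (c - (ρ : ℂ) ^ 2)⁻¹) (uIcc 0 r) := by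
    refine continuousOn_id.smul (ContinuousOn.inv₀ (by fun_prop) fun ρ hρ h => (hsq ρ hρ).ne ?_)
    rw [← sub_eq_zero.1 h, div_self hc, norm_one]
  rw [intervalIntegral.integral_eq_sub_of_hasDerivAt hderiv (hcont.intervalIntegrable)]
  simp

/-- The exponential transform of the disk `𝔻(0,r)` is `1 − r²/(z·w̄)`
for `|z|, |w| > r`. -/
theorem expTransform_disk (r : ℝ) (hr : 0 < r) (z w : ℂ)
    (hz : r < ‖z‖) (hw : r < ‖w‖) :
    expTransform {ζ : ℂ | ‖ζ‖ < r} z w =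
      1 - (r : ℂ) ^ 2 / (z * (starRingEnd ℂ) w) := by
  have hball : {ζ : ℂ | ‖ζ‖ < r} = ball 0 r := by ext; simp
  have hcont : ContinuousOn (fun ζ => ((ζ - z) * conj (ζ - w))⁻¹) (closedBall 0 r) := by
    refine ContinuousOn.inv₀ (by fun_prop) fun ζ hζ => ?_
    have hζ : ‖ζ‖ ≤ r := mem_closedBall_zero_iff.1 hζ
    refine mul_ne_zero (sub_ne_zero.2 ?_) ((map_ne_zero _).2 (sub_ne_zero.2 ?_)) <;>
      rintro rfl <;> linarith
  have hcircle : EqOn (fun ρ : ℝ => ρ • circleAverage (fun ζ => ((ζ - z) * conj (ζ - w))⁻¹) 0 ρ)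
      (fun ρ : ℝ => ρ • (z * conj w - (ρ : ℂ) ^ 2)⁻¹) (uIcc 0 r) := fun ρ hρ => by
    rw [uIcc_of_le hr.le] at hρ
    have hρr : |ρ| ≤ r := by rw [abs_of_nonneg hρ.1]; exact hρ.2
    dsimp only
    rw [circleAverage_inv_mul_conj (hρr.trans_lt hz) (hρr.trans_lt hw)]
  have hzw : r ^ 2 < ‖z * conj w‖ := by
    rw [norm_mul, norm_conj]
    nlinarith
  have hne : 1 - (r : ℂ) ^ 2 / (z * conj w) ≠ 0 :=
    sub_ne_zero.2 fun h => (norm_ofReal_sq_div_lt_one hzw).ne (by rw [← h, norm_one])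
  rw [expTransform, hball, integral_ball_zero_eq_intervalIntegral_circleAverage hr.le hcont,
    intervalIntegral.integral_congr hcircle, intervalIntegral_smul_inv_sub_sq hzw, real_smul]
  convert exp_log hne using 2
  push_cast
  field_simp
end

section
/- Let Ω₁, Ω₂ ⊆ ℂ be bounded open sets, let A, B ∈ ℂ[X] be coprime polynomials with B ≠ 0 and deg A ≤ deg B, and let F = A/B. Let p ≥ 1 and assume: (i) B has no zeros in Ω₁ and F(Ω₁) ⊆ Ω₂; (ii) for almost every u ∈ Ω₂ (with respect to area measure), the total multiplicity of the roots of A − uB lying in Ω₁ equals p. Let z, w ∈ ℂ∖closure(Ω₂) be such that deg(A − zB) = deg(A − wB) = deg B and such that every root of A − zB, of A − wB, and of B lies outside closure(Ω₁). Then E_{Ω₂}(z,w)^p = ( ∏_{α ∈ roots(A−zB)} ∏_{γ ∈ roots(A−wB)} E_{Ω₁}(α,γ) · ∏_{β ∈ roots(B)} ∏_{δ ∈ roots(B)} E_{Ω₁}(β,δ) ) / ( ∏_{α ∈ roots(A−zB)} ∏_{δ ∈ roots(B)} E_{Ω₁}(α,δ) · ∏_{β ∈ roots(B)} ∏_{γ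 ∈ roots(A−wB)} E_{Ω₁}(β,γ) ), where all roots are counted with multiplicity. -/
open MeasureTheory Polynomial

/-!
The area formula for the `p`-valent map `F = A/B` gives
`p ∫_{Ω₂} k_{z,w} dA = ∫_{Ω₁} |F'|² k_{z,w}(F) dA` for `k_{z,w}(u) = 1/((u-z) conj(u-w))`, and
`|F'|² k_{z,w}(F) = (F'/(F-z)) · conj(F'/(F-w))`. Since `F - u = (A - uB)/B`, the logarithmic
derivative `F'/(F-u)` is `∑ 1/(ζ-α) - ∑ 1/(ζ-β)` over the roots `α` of `A - uB` and `β` of `B`.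
Expanding the product gives four double sums of kernels `k_{α,γ}`, and exponentiating turns them
into the four double products of exponential transforms.

The area formula for a holomorphic `F` comes from cutting the set where `F' ≠ 0` into countably
many pieces on which `F` is injective and changing variables on each piece. By Sard's theorem
almost every value is not critical, so all its preimages lie in that set; for `F = A/B` they are
then exactly the roots of `A - uB` in `Ω₁`, all of them simple.
-/

open Set Function Topology ENNReal ComplexConjugate

structure IsInjOnPartition {X Y : Type*} [MeasurableSpace X] (f : X → Y) (E : ℕ → Set X)
    (s : Set X) : Prop where
  measurableSet : ∀ n, MeasurableSet (E n)
  pairwise_disjoint : Pairwise (Disjoint on E)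
  iUnion_eq : ⋃ n, E n = s
  injOn : ∀ n, InjOn f (E n)

namespace IsInjOnPartition

variable {X Y : Type*} [MeasurableSpace X] {f : X → Y} {E : ℕ → Set X} {s : Set X}

theorem exists_of_locally_injOn [TopologicalSpace X] [SecondCountableTopology X]
    [OpensMeasurableSpace X] (hs : MeasurableSet s) (hf : ∀ x ∈ s, ∃ t ∈ 𝓝 x, InjOn f t) :
    ∃ E, IsInjOnPartition f E s := by
  choose! t ht hinj using hf
  obtain ⟨c, hcs, hc, hsc⟩ := TopologicalSpace.countable_cover_nhdsWithin
    (f := fun x => interior (t x)) fun x hx =>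
      mem_nhdsWithin_of_mem_nhds (interior_mem_nhds.2 (ht x hx))
  rcases c.eq_empty_or_nonempty with rfl | hne
  · refine ⟨fun _ => ∅, fun _ => .empty, fun _ _ _ => disjoint_bot_left, ?_,
      fun _ => injOn_empty f⟩
    simpa [eq_comm, subset_empty_iff] using hsc
  obtain ⟨φ, rfl⟩ := hc.exists_eq_range hne
  set e : ℕ → Set X := fun n => interior (t (φ n)) ∩ s
  refine ⟨disjointed e, .disjointed fun n => isOpen_interior.measurableSet.inter hs,
    disjoint_disjointed e, ?_, fun n => (hinj _ (hcs ⟨n, rfl⟩)).mono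
      ((disjointed_subset e n).trans (inter_subset_left.trans interior_subset))⟩
  rw [iUnion_disjointed, ← iUnion_inter, inter_eq_right]
  simpa only [biUnion_range] using hsc

theorem subset (hE : IsInjOnPartition f E s) (n : ℕ) : E n ⊆ s :=
  hE.iUnion_eq ▸ subset_iUnion E n

theorem encard_setOf_mem_image (hE : IsInjOnPartition f E s) (y : Y) :
    {n | y ∈ f '' E n}.encard = (s ∩ f ⁻¹' {y}).encard := by
  have hmem : ∀ x ∈ s, ∃ n, x ∈ E n := fun x hx => mem_iUnion.1 (hE.iUnion_eq ▸ hx)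
  choose! idx hidx using hmem
  have hunique : ∀ x ∈ s, ∀ n, x ∈ E n → idx x = n := fun x hx n hxn =>
    (hE.pairwise_disjoint.eq <| not_disjoint_iff.2 ⟨x, hidx x hx, hxn⟩)
  rw [← InjOn.encard_image (f := idx)]
  · congr 1
    ext n
    constructor
    · rintro ⟨x, hxn, rfl⟩
      exact ⟨x, ⟨hE.subset n hxn, rfl⟩, hunique x (hE.subset n hxn) n hxn⟩
    · rintro ⟨x, ⟨hxs, hxy⟩, rfl⟩
      exact ⟨x, hidx x hxs, hxy⟩
  · rintro x ⟨hxs, hxy⟩ x' ⟨hx's, hx'y⟩ h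
    exact hE.injOn _ (hidx x hxs) (h ▸ hidx x' hx's) (hxy.trans hx'y.symm)

theorem measurableSet_image [TopologicalSpace X] [PolishSpace X] [BorelSpace X]
    [TopologicalSpace Y] [MeasurableSpace Y] [T2Space Y] [OpensMeasurableSpace Y]
    (hE : IsInjOnPartition f E s) (hf : ContinuousOn f s) (n : ℕ) : MeasurableSet (f '' E n) :=
  (hE.measurableSet n).image_of_continuousOn_injOn (hf.mono (hE.subset n)) (hE.injOn n)

end IsInjOnPartition

theorem tsum_indicator_apply_eq_nsmul {α M : Type*} [AddCommMonoid M] [TopologicalSpace M]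
    {S : ℕ → Set α} (G : α → M) {y : α} {p : ℕ} (h : {n | y ∈ S n}.encard = p) :
    ∑' n, (S n).indicator G y = p • G y := by
  have hfin : {n | y ∈ S n}.Finite := finite_of_encard_eq_coe h
  rw [tsum_eq_sum (s := hfin.toFinset) fun n hn => indicator_of_notMem (by simpa using hn) G,
    Finset.sum_congr rfl fun n hn => indicator_of_mem (by simpa using hn) G, Finset.sum_const]
  rw [hfin.encard_eq_coe_toFinset_card, Nat.cast_inj] at h
  rw [h]

theorem HasStrictDerivAt.exists_mem_nhds_injOn {𝕜 : Type*} [NontriviallyNormedField 𝕜]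
    [CompleteSpace 𝕜] {f : 𝕜 → 𝕜} {f' a : 𝕜} (hf : HasStrictDerivAt f f' a) (hf' : f' ≠ 0) :
    ∃ t ∈ 𝓝 a, InjOn f t :=
  ⟨_, hf.eventually_left_inverse hf', fun _ hx _ hy hxy => hx.symm.trans (hxy ▸ hy)⟩

namespace Complex

theorem det_restrictScalars_smulRight_one (c : ℂ) :
    (((1 : ℂ →L[ℂ] ℂ).smulRight c).restrictScalars ℝ).det = normSq c := by
  have h : (((1 : ℂ →L[ℂ] ℂ).smulRight c).restrictScalars ℝ : ℂ →ₗ[ℝ] ℂ) =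
      Algebra.lmul ℝ ℂ c := by
    ext z
    simp [mul_comm]
  rw [ContinuousLinearMap.det, h, ← Algebra.norm_apply, Algebra.norm_complex_apply]

variable {f f' : ℂ → ℂ} {s : Set ℂ}

theorem hasFDerivWithinAt_restrictScalars (hf : ∀ x ∈ s, HasDerivAt f (f' x) x) :
    ∀ x ∈ s, HasFDerivWithinAt f (((1 : ℂ →L[ℂ] ℂ).smulRight (f' x)).restrictScalars ℝ) s x :=
  fun x hx => ((hf x hx).hasFDerivAt.restrictScalars ℝ).hasFDerivWithinAt

theorem volume_image_eq_zero_of_hasDerivAt_zero (hf : ∀ x ∈ s, HasDerivAt f 0 x) :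
    volume (f '' s) = 0 :=
  addHaar_image_eq_zero_of_det_fderivWithin_eq_zero volume
    (hasFDerivWithinAt_restrictScalars (f' := 0) hf) fun _ _ => by
      rw [det_restrictScalars_smulRight_one, Pi.zero_apply, map_zero]

theorem lintegral_image_eq_lintegral_normSq_mul (hs : MeasurableSet s)
    (hf : ∀ x ∈ s, HasDerivAt f (f' x) x) (hinj : InjOn f s) (g : ℂ → ℝ≥0∞) :
    ∫⁻ x in f '' s, g x = ∫⁻ x in s, ENNReal.ofReal (normSq (f' x)) * g (f x) := by
  simp only [lintegral_image_eq_lintegral_abs_det_fderiv_mul volume hs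
    (hasFDerivWithinAt_restrictScalars hf) hinj, det_restrictScalars_smulRight_one,
    abs_of_nonneg (normSq_nonneg _)]

theorem integral_image_eq_integral_normSq_smul {E : Type*} [NormedAddCommGroup E]
    [NormedSpace ℝ E] (hs : MeasurableSet s) (hf : ∀ x ∈ s, HasDerivAt f (f' x) x)
    (hinj : InjOn f s) (g : ℂ → E) :
    ∫ x in f '' s, g x = ∫ x in s, normSq (f' x) • g (f x) := by
  simp only [integral_image_eq_integral_abs_det_fderiv_smul volume hs
    (hasFDerivWithinAt_restrictScalars hf) hinj, det_restrictScalars_smulRight_one,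
    abs_of_nonneg (normSq_nonneg _)]

end Complex

section AreaFormula

variable {F : ℂ → ℂ} {U V : Set ℂ} {p : ℕ} {S : ℕ → Set ℂ}

theorem exists_isInjOnPartition_of_differentiableOn (hU : IsOpen U)
    (hF : DifferentiableOn ℂ F U) :
    ∃ S, IsInjOnPartition F S (U ∩ {x | deriv F x ≠ 0}) :=
  IsInjOnPartition.exists_of_locally_injOn
    (hU.measurableSet.inter ((measurable_deriv F) (measurableSet_singleton 0).compl))
    fun _ hx => (hF.analyticAt (hU.mem_nhds hx.1)).hasStrictDerivAt.exists_mem_nhds_injOn hx.2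

theorem ae_tsum_indicator_image_eq {M : Type*} [AddCommMonoid M] [TopologicalSpace M]
    (hU : IsOpen U) (hF : DifferentiableOn ℂ F U) (hV : MeasurableSet V) (hUV : MapsTo F U V)
    (hp : ∀ᵐ y ∂volume.restrict V, (U ∩ F ⁻¹' {y}).encard = p)
    (hS : IsInjOnPartition F S (U ∩ {x | deriv F x ≠ 0})) (G : ℂ → M) :
    ∀ᵐ y, ∑' n, (F '' S n).indicator G y = V.indicator (fun y => p • G y) y := by
  have hcrit : ∀ᵐ y, y ∉ F '' (U ∩ {x | deriv F x = 0}) :=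
    measure_eq_zero_iff_ae_notMem.1 <| Complex.volume_image_eq_zero_of_hasDerivAt_zero
      fun x hx => hx.2 ▸ (hF.differentiableAt (hU.mem_nhds hx.1)).hasDerivAt
  filter_upwards [(ae_restrict_iff' hV).1 hp, hcrit] with y hyp hy
  by_cases hyV : y ∈ V
  · rw [indicator_of_mem hyV]
    refine tsum_indicator_apply_eq_nsmul G ?_
    rw [hS.encard_setOf_mem_image, ← hyp hyV]
    congr 1
    ext x
    refine ⟨fun hx => ⟨hx.1.1, hx.2⟩, fun hx => ⟨⟨hx.1, fun h0 => hy ⟨x, ⟨hx.1, h0⟩, hx.2⟩⟩, hx.2⟩⟩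
  · have hyS : ∀ n, y ∉ F '' S n := fun n ⟨x, hx, hxy⟩ =>
      hyV (hxy ▸ hUV (((hS.subset n).trans inter_subset_left) hx))
    simp [indicator_of_notMem hyV, indicator_of_notMem (hyS _)]

theorem tsum_lintegral_image_eq (hU : IsOpen U) (hF : DifferentiableOn ℂ F U)
    (hV : MeasurableSet V) (hUV : MapsTo F U V)
    (hp : ∀ᵐ y ∂volume.restrict V, (U ∩ F ⁻¹' {y}).encard = p)
    (hS : IsInjOnPartition F S (U ∩ {x | deriv F x ≠ 0})) {G : ℂ → ℝ≥0∞} (hG : Measurable G) :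
    ∑' n, ∫⁻ y in F '' S n, G y = p * ∫⁻ y in V, G y := by
  have hSm := hS.measurableSet_image (hF.continuousOn.mono inter_subset_left)
  calc ∑' n, ∫⁻ y in F '' S n, G y = ∑' n, ∫⁻ y, (F '' S n).indicator G y := by
        simp_rw [lintegral_indicator (hSm _)]
    _ = ∫⁻ y, ∑' n, (F '' S n).indicator G y :=
        (lintegral_tsum fun n => (hG.indicator (hSm n)).aemeasurable).symm
    _ = ∫⁻ y, V.indicator (fun y => p • G y) y :=
        lintegral_congr_ae (ae_tsum_indicator_image_eq hU hF hV hUV hp hS G)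
    _ = p * ∫⁻ y in V, G y := by
        simp_rw [lintegral_indicator hV, nsmul_eq_mul, lintegral_const_mul _ hG]

theorem lintegral_normSq_deriv_mul_comp (hU : IsOpen U) (hF : DifferentiableOn ℂ F U)
    (hV : MeasurableSet V) (hUV : MapsTo F U V)
    (hp : ∀ᵐ y ∂volume.restrict V, (U ∩ F ⁻¹' {y}).encard = p) {G : ℂ → ℝ≥0∞}
    (hG : Measurable G) :
    ∫⁻ x in U, ENNReal.ofReal (Complex.normSq (deriv F x)) * G (F x) = p * ∫⁻ y in V, G y := by
  obtain ⟨S, hS⟩ := exists_isInjOnPartition_of_differentiableOn hU hF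
  have hderiv : ∀ n, ∀ x ∈ S n, HasDerivAt F (deriv F x) x := fun n x hx =>
    (hF.differentiableAt (hU.mem_nhds (hS.subset n hx).1)).hasDerivAt
  have hreg : MeasurableSet {x | deriv F x ≠ 0} :=
    (measurable_deriv F) (measurableSet_singleton 0).compl
  have hcrit : ∫⁻ x in U \ {x | deriv F x ≠ 0},
      ENNReal.ofReal (Complex.normSq (deriv F x)) * G (F x) = 0 :=
    (setLIntegral_congr_fun (hU.measurableSet.diff hreg) fun x hx => by
      simp [not_not.1 hx.2]).trans lintegral_zero
  rw [← tsum_lintegral_image_eq hU hF hV hUV hp hS hG, ← lintegral_inter_add_sdiff _ U hreg,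
    hcrit, add_zero, ← hS.iUnion_eq, lintegral_iUnion hS.measurableSet hS.pairwise_disjoint]
  exact tsum_congr fun n => (Complex.lintegral_image_eq_lintegral_normSq_mul
    (hS.measurableSet n) (hderiv n) (hS.injOn n) G).symm

theorem integral_normSq_deriv_smul_comp {E : Type*} [NormedAddCommGroup E] [NormedSpace ℝ E]
    (hU : IsOpen U) (hF : DifferentiableOn ℂ F U) (hV : MeasurableSet V) (hUV : MapsTo F U V)
    (hp : ∀ᵐ y ∂volume.restrict V, (U ∩ F ⁻¹' {y}).encard = p) {g : ℂ → E}
    (hgm : StronglyMeasurable g) (hg : IntegrableOn g V) :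
    ∫ x in U, Complex.normSq (deriv F x) • g (F x) = p • ∫ y in V, g y := by
  obtain ⟨S, hS⟩ := exists_isInjOnPartition_of_differentiableOn hU hF
  have hSm := hS.measurableSet_image (hF.continuousOn.mono inter_subset_left)
  have hderiv : ∀ n, ∀ x ∈ S n, HasDerivAt F (deriv F x) x := fun n x hx =>
    (hF.differentiableAt (hU.mem_nhds (hS.subset n hx).1)).hasDerivAt
  have hint : IntegrableOn (fun x => Complex.normSq (deriv F x) • g (F x)) U := by
    refine ⟨(Complex.continuous_normSq.measurable.comp (measurable_deriv F)).aestronglyMeasurable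
      |>.smul (hgm.aestronglyMeasurable.comp_aemeasurable
        (hF.continuousOn.aemeasurable hU.measurableSet)), ?_⟩
    simp only [HasFiniteIntegral, enorm_smul, Real.enorm_of_nonneg (Complex.normSq_nonneg _)]
    rw [lintegral_normSq_deriv_mul_comp hU hF hV hUV hp hgm.enorm]
    exact mul_lt_top (natCast_lt_top p) hg.2
  have hfin : ∑' n, ∫⁻ y, ‖(F '' S n).indicator g y‖ₑ ≠ ⊤ := by
    simp_rw [enorm_indicator_eq_indicator_enorm, lintegral_indicator (hSm _),
      tsum_lintegral_image_eq hU hF hV hUV hp hS hgm.enorm]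
    exact (mul_lt_top (natCast_lt_top p) hg.2).ne
  calc ∫ x in U, Complex.normSq (deriv F x) • g (F x)
      = ∫ x in ⋃ n, S n, Complex.normSq (deriv F x) • g (F x) := by
        refine setIntegral_eq_of_subset_of_forall_sdiff_eq_zero hU.measurableSet
          (hS.iUnion_eq ▸ inter_subset_left) fun x hx => ?_
        have hcrit : deriv F x = 0 := by simpa [hS.iUnion_eq, hx.1] using hx.2
        simp [hcrit]
    _ = ∑' n, ∫ x in S n, Complex.normSq (deriv F x) • g (F x) :=
        integral_iUnion hS.measurableSet hS.pairwise_disjoint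
          (hint.mono_set (hS.iUnion_eq ▸ inter_subset_left))
    _ = ∑' n, ∫ y, (F '' S n).indicator g y := tsum_congr fun n => by
        rw [integral_indicator (hSm n), Complex.integral_image_eq_integral_normSq_smul
          (hS.measurableSet n) (hderiv n) (hS.injOn n)]
    _ = ∫ y, ∑' n, (F '' S n).indicator g y :=
        (integral_tsum (fun n => (hgm.indicator (hSm n)).aestronglyMeasurable) hfin).symm
    _ = ∫ y, V.indicator (fun y => p • g y) y :=
        integral_congr_ae (ae_tsum_indicator_image_eq hU hF hV hUV hp hS g)
    _ = p • ∫ y in V, g y := by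
        simp_rw [integral_indicator hV, ← Nat.cast_smul_eq_nsmul ℝ, integral_smul]

end AreaFormula

section MultisetIntegral

variable {α G ι : Type*} [MeasurableSpace α] {μ : Measure α} [NormedAddCommGroup G]
  {s : Multiset ι} {f : ι → α → G}

theorem integrable_multiset_sum_map (hf : ∀ i ∈ s, Integrable (f i) μ) :
    Integrable (fun x => (s.map fun i => f i x).sum) μ := by
  induction s using Multiset.induction_on with
  | empty => simp
  | cons a s ih =>
    rw [Multiset.forall_mem_cons] at hf
    simp only [Multiset.map_cons, Multiset.sum_cons]
    exact hf.1.add (ih hf.2)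

theorem integral_multiset_sum_map [NormedSpace ℝ G] (hf : ∀ i ∈ s, Integrable (f i) μ) :
    ∫ x, (s.map fun i => f i x).sum ∂μ = (s.map fun i => ∫ x, f i x ∂μ).sum := by
  induction s using Multiset.induction_on with
  | empty => simp
  | cons a s ih =>
    rw [Multiset.forall_mem_cons] at hf
    simp only [Multiset.map_cons, Multiset.sum_cons]
    rw [integral_add hf.1 (integrable_multiset_sum_map hf.2), ih hf.2]

end MultisetIntegral

/-- The logarithmic derivative of a polynomial whose roots are `s`, see
`Splits.eval_derivative_div_eval_of_ne_zero`. -/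
noncomputable def invSubSum (s : Multiset ℂ) (ζ : ℂ) : ℂ := (s.map fun a => 1 / (ζ - a)).sum

theorem continuousOn_invSubSum {s : Multiset ℂ} {K : Set ℂ} (hs : ∀ a ∈ s, a ∉ K) :
    ContinuousOn (invSubSum s) K :=
  continuousOn_multiset_sum s fun a ha => continuousOn_const.div (by fun_prop) fun _ hζ =>
    sub_ne_zero.2 (ne_of_mem_of_not_mem hζ (hs a ha))

theorem invSubSum_mul_conj (s t : Multiset ℂ) (ζ : ℂ) :
    invSubSum s ζ * conj (invSubSum t ζ) =
      (s.map fun a => (t.map fun b => ((ζ - a) * conj (ζ - b))⁻¹).sum).sum := by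
  simp only [invSubSum, map_multiset_sum, Multiset.map_map, Function.comp_def,
    ← Multiset.sum_map_mul_right]
  refine congrArg _ (Multiset.map_congr rfl fun a _ => ?_)
  simp only [← Multiset.sum_map_mul_left, one_div, map_inv₀, mul_inv]

theorem integrableOn_of_continuousOn_closure {X E : Type*} [MetricSpace X] [ProperSpace X]
    [MeasurableSpace X] [OpensMeasurableSpace X] {μ : Measure X} [IsFiniteMeasureOnCompacts μ]
    [NormedAddCommGroup E] {s : Set X} {g : X → E} (hs : Bornology.IsBounded s)
    (hg : ContinuousOn g (closure s)) : IntegrableOn g s μ :=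
  (hg.integrableOn_compact hs.isCompact_closure).mono_set subset_closure

variable {Ω : Set ℂ}

theorem integrableOn_expTransform_integrand (hΩ : Bornology.IsBounded Ω) {a b : ℂ}
    (ha : a ∉ closure Ω) (hb : b ∉ closure Ω) :
    IntegrableOn (fun ζ => ((ζ - a) * conj (ζ - b))⁻¹) Ω := by
  refine integrableOn_of_continuousOn_closure hΩ <| ContinuousOn.inv₀ (by fun_prop) ?_
  exact fun ζ hζ => mul_ne_zero (sub_ne_zero.2 (ne_of_mem_of_not_mem hζ ha))
    ((_root_.map_ne_zero _).2 (sub_ne_zero.2 (ne_of_mem_of_not_mem hζ hb)))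

theorem integrableOn_invSubSum_mul_conj (hΩ : Bornology.IsBounded Ω) {s t : Multiset ℂ}
    (hs : ∀ a ∈ s, a ∉ closure Ω) (ht : ∀ b ∈ t, b ∉ closure Ω) :
    IntegrableOn (fun ζ => invSubSum s ζ * conj (invSubSum t ζ)) Ω :=
  integrableOn_of_continuousOn_closure hΩ <|
    (continuousOn_invSubSum hs).mul
      (Complex.continuous_conj.comp_continuousOn (continuousOn_invSubSum ht))

theorem prod_prod_expTransform (hΩ : Bornology.IsBounded Ω) {s t : Multiset ℂ}
    (hs : ∀ a ∈ s, a ∉ closure Ω) (ht : ∀ b ∈ t, b ∉ closure Ω) :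
    (s.map fun a => (t.map fun b => expTransform Ω a b).prod).prod =
      Complex.exp (-(1 / (Real.pi : ℂ)) * ∫ ζ in Ω, invSubSum s ζ * conj (invSubSum t ζ)) := by
  simp_rw [invSubSum_mul_conj]
  rw [integral_multiset_sum_map fun a ha => integrable_multiset_sum_map fun b hb =>
      integrableOn_expTransform_integrand hΩ (hs a ha) (ht b hb),
    ← Multiset.sum_map_mul_left, Complex.exp_multiset_sum, Multiset.map_map]
  refine congrArg _ (Multiset.map_congr rfl fun a ha => ?_)
  rw [Function.comp_apply, integral_multiset_sum_map fun b hb =>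
      integrableOn_expTransform_integrand hΩ (hs a ha) (ht b hb),
    ← Multiset.sum_map_mul_left, Complex.exp_multiset_sum, Multiset.map_map]
  rfl

-- The exponential transform `E_Ω(D, D')` of the divisors `D = s₁ - s₂` and `D' = t₁ - t₂`.
theorem div_prod_prod_expTransform_eq_exp (hΩ : Bornology.IsBounded Ω) {s₁ s₂ t₁ t₂ : Multiset ℂ}
    (hs₁ : ∀ a ∈ s₁, a ∉ closure Ω) (hs₂ : ∀ a ∈ s₂, a ∉ closure Ω)
    (ht₁ : ∀ b ∈ t₁, b ∉ closure Ω) (ht₂ : ∀ b ∈ t₂, b ∉ closure Ω) :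
    (s₁.map fun a => (t₁.map fun b => expTransform Ω a b).prod).prod *
        (s₂.map fun a => (t₂.map fun b => expTransform Ω a b).prod).prod /
      ((s₁.map fun a => (t₂.map fun b => expTransform Ω a b).prod).prod *
        (s₂.map fun a => (t₁.map fun b => expTransform Ω a b).prod).prod) =
      Complex.exp (-(1 / (Real.pi : ℂ)) * ∫ ζ in Ω,
        (invSubSum s₁ ζ - invSubSum s₂ ζ) * conj (invSubSum t₁ ζ - invSubSum t₂ ζ)) := by
  have h11 := integrableOn_invSubSum_mul_conj hΩ hs₁ ht₁
  have h12 := integrableOn_invSubSum_mul_conj hΩ hs₁ ht₂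
  have h21 := integrableOn_invSubSum_mul_conj hΩ hs₂ ht₁
  have h22 := integrableOn_invSubSum_mul_conj hΩ hs₂ ht₂
  rw [prod_prod_expTransform hΩ hs₁ ht₁, prod_prod_expTransform hΩ hs₂ ht₂,
    prod_prod_expTransform hΩ hs₁ ht₂, prod_prod_expTransform hΩ hs₂ ht₁, ← Complex.exp_add,
    ← Complex.exp_add, ← Complex.exp_sub]
  simp_rw [map_sub, sub_mul, mul_sub]
  rw [integral_sub (h11.fun_sub h12) (h21.fun_sub h22), integral_sub h11 h12,
    integral_sub h21 h22]
  congr 1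
  ring

namespace Polynomial

theorem wronskian_sub_C_mul_right {R : Type*} [CommRing R] (A B : R[X]) (u : R) :
    wronskian B (A - C u * B) = wronskian B A := by
  simp only [wronskian, derivative_sub, derivative_C_mul]
  ring

variable {A B : ℂ[X]} {x u : ℂ}

theorem hasDerivAt_eval_div_eval {𝕜 : Type*} [NontriviallyNormedField 𝕜] {A B : 𝕜[X]} {x : 𝕜}
    (hB : B.eval x ≠ 0) :
    HasDerivAt (fun ζ => A.eval ζ / B.eval ζ) ((wronskian B A).eval x / B.eval x ^ 2) x :=
  ((A.hasDerivAt x).fun_div (B.hasDerivAt x) hB).congr_deriv <| by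
    simp only [wronskian, eval_sub, eval_mul]
    ring

theorem deriv_eval_div_eval_div_sub (hB : B.eval x ≠ 0) (hP : (A - C u * B).eval x ≠ 0) :
    deriv (fun ζ => A.eval ζ / B.eval ζ) x / (A.eval x / B.eval x - u) =
      invSubSum (A - C u * B).roots x - invSubSum B.roots x := by
  set P := A - C u * B
  have hFu : A.eval x / B.eval x - u = P.eval x / B.eval x := by
    rw [eq_div_iff hB]
    simp [P, sub_mul, div_mul_cancel₀ _ hB]
  have hW : wronskian B A = wronskian B P := (wronskian_sub_C_mul_right A B u).symm
  rw [(hasDerivAt_eval_div_eval hB).deriv, hFu, hW, invSubSum,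
    invSubSum, ← (IsAlgClosed.splits _).eval_derivative_div_eval_of_ne_zero hP,
    ← (IsAlgClosed.splits _).eval_derivative_div_eval_of_ne_zero hB]
  simp only [wronskian, eval_sub, eval_mul]
  field_simp

theorem eval_sub_C_mul_eq_zero_iff (hB : B.eval x ≠ 0) :
    (A - C u * B).eval x = 0 ↔ A.eval x / B.eval x = u := by
  simp [sub_eq_zero, div_eq_iff hB]

-- The zeros of `wronskian B A` are the critical points of `A/B`; off their image the roots of
-- `A - uB` are simple.
theorem card_filter_roots_eq_encard {Ω : Set ℂ} [DecidablePred (· ∈ Ω)]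
    (hB : ∀ x ∈ Ω, B.eval x ≠ 0)
    (hu : u ∉ (fun ζ => A.eval ζ / B.eval ζ) '' (Ω ∩ {x | (wronskian B A).eval x = 0})) :
    (((A - C u * B).roots.filter (· ∈ Ω)).card : ℕ∞) =
      (Ω ∩ (fun ζ => A.eval ζ / B.eval ζ) ⁻¹' {u}).encard := by
  set P := A - C u * B
  have hroot : ∀ x ∈ Ω, P.IsRoot x ↔ A.eval x / B.eval x = u := fun x hx =>
    eval_sub_C_mul_eq_zero_iff (hB x hx)
  have hsimple : ∀ x ∈ Ω, P.IsRoot x → ¬ (derivative P).IsRoot x := fun x hx hPx hP'x => by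
    have hW : (wronskian B P).eval x = 0 := by simp [wronskian, hPx.eq_zero, hP'x.eq_zero]
    rw [wronskian_sub_C_mul_right] at hW
    exact hu ⟨x, ⟨hx, hW⟩, (hroot x hx).1 hPx⟩
  by_cases hP : P = 0
  · have hempty : Ω ∩ (fun ζ => A.eval ζ / B.eval ζ) ⁻¹' {u} = ∅ :=
      eq_empty_of_forall_notMem fun x ⟨hx, hFx⟩ =>
        hsimple x hx ((hroot x hx).2 hFx) (by simp [hP])
    simp [hP, hempty]
  have hnodup : (P.roots.filter (· ∈ Ω)).Nodup := by
    refine Multiset.nodup_iff_count_le_one.2 fun x => ?_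
    rw [Multiset.count_filter]
    split_ifs with hx
    · rw [count_roots, ← not_lt, one_lt_rootMultiplicity_iff_isRoot hP]
      exact fun h => hsimple x hx h.1 h.2
    · exact zero_le_one
  rw [← Multiset.toFinset_card_of_nodup hnodup, ← encard_coe_eq_coe_finsetCard]
  congr 1
  ext x
  simp only [Finset.mem_coe, Multiset.mem_toFinset, Multiset.mem_filter, mem_roots hP,
    mem_inter_iff, mem_preimage, mem_singleton_iff]
  exact ⟨fun h => ⟨h.2, (hroot x h.2).1 h.1⟩, fun h => ⟨(hroot x h.1).2 h.2, h.1⟩⟩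

theorem ae_encard_preimage_eval_div_eval_eq {Ω V : Set ℂ} [DecidablePred (· ∈ Ω)] {p : ℕ}
    (hB : ∀ x ∈ Ω, B.eval x ≠ 0)
    (hp : ∀ᵐ u ∂volume.restrict V, ((A - C u * B).roots.filter (· ∈ Ω)).card = p) :
    ∀ᵐ u ∂volume.restrict V, (Ω ∩ (fun ζ => A.eval ζ / B.eval ζ) ⁻¹' {u}).encard = p := by
  have hcrit : ∀ᵐ u, u ∉ (fun ζ => A.eval ζ / B.eval ζ) '' (Ω ∩ {x | (wronskian B A).eval x = 0}) :=
    measure_eq_zero_iff_ae_notMem.1 <| Complex.volume_image_eq_zero_of_hasDerivAt_zero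
      fun x hx => (hasDerivAt_eval_div_eval (hB x hx.1)).congr_deriv (by rw [hx.2, zero_div])
  filter_upwards [hp, ae_restrict_of_ae hcrit] with u hu hu'
  rw [← card_filter_roots_eq_encard hB hu', hu]

theorem normSq_deriv_smul_inv_eval_div_eval_sub_mul_conj {z w : ℂ} (hB : B.eval x ≠ 0)
    (hz : (A - C z * B).eval x ≠ 0) (hw : (A - C w * B).eval x ≠ 0) :
    Complex.normSq (deriv (fun ζ => A.eval ζ / B.eval ζ) x) •
        ((A.eval x / B.eval x - z) * conj (A.eval x / B.eval x - w))⁻¹ =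
      (invSubSum (A - C z * B).roots x - invSubSum B.roots x) *
        conj (invSubSum (A - C w * B).roots x - invSubSum B.roots x) := by
  rw [← deriv_eval_div_eval_div_sub hB hz, ← deriv_eval_div_eval_div_sub hB hw,
    Complex.real_smul, ← Complex.mul_conj, map_div₀, mul_inv]
  ring

end Polynomial

open scoped Classical in
theorem expTransform_rational_map_general (Ω₁ Ω₂ : Set ℂ)
    (h1o : IsOpen Ω₁) (h1b : Bornology.IsBounded Ω₁)
    (h2o : IsOpen Ω₂) (h2b : Bornology.IsBounded Ω₂)
    (A B : Polynomial ℂ)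
    (p : ℕ)
    (hmap : ∀ ζ ∈ Ω₁, B.eval ζ ≠ 0 ∧ A.eval ζ / B.eval ζ ∈ Ω₂)
    (hvalent : ∀ᵐ u ∂(volume.restrict Ω₂),
      Multiset.card (Multiset.filter (fun x => x ∈ Ω₁) (A - Polynomial.C u * B).roots) = p)
    (z w : ℂ) (hz : z ∉ closure Ω₂) (hw : w ∉ closure Ω₂)
    (hrz : ∀ α ∈ (A - Polynomial.C z * B).roots, α ∉ closure Ω₁)
    (hrw : ∀ γ ∈ (A - Polynomial.C w * B).roots, γ ∉ closure Ω₁)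
    (hrB : ∀ β ∈ B.roots, β ∉ closure Ω₁) :
    expTransform Ω₂ z w ^ p =
      ((((A - Polynomial.C z * B).roots.map (fun α =>
            ((A - Polynomial.C w * B).roots.map (fun γ => expTransform Ω₁ α γ)).prod)).prod *
        (B.roots.map (fun β =>
            (B.roots.map (fun δ => expTransform Ω₁ β δ)).prod)).prod) /
      ((((A - Polynomial.C z * B).roots.map (fun α =>
            (B.roots.map (fun δ => expTransform Ω₁ α δ)).prod)).prod) *
        (B.roots.map (fun β =>
            ((A - Polynomial.C w * B).roots.map (fun γ => expTransform Ω₁ β γ)).prod)).prod)) := by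
  have hB : ∀ ζ ∈ Ω₁, B.eval ζ ≠ 0 := fun ζ hζ => (hmap ζ hζ).1
  have hP : ∀ ζ ∈ Ω₁, ∀ u ∉ closure Ω₂, (A - C u * B).eval ζ ≠ 0 := fun ζ hζ u hu h0 =>
    hu (subset_closure ((eval_sub_C_mul_eq_zero_iff (hB ζ hζ)).1 h0 ▸ (hmap ζ hζ).2))
  have harea := integral_normSq_deriv_smul_comp h1o
    (fun ζ hζ => (hasDerivAt_eval_div_eval (hB ζ hζ)).differentiableAt.differentiableWithinAt)
    h2o.measurableSet (fun ζ hζ => (hmap ζ hζ).2) (ae_encard_preimage_eval_div_eval_eq hB hvalent)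
    (g := fun u => ((u - z) * conj (u - w))⁻¹) (by fun_prop)
    (integrableOn_expTransform_integrand h2b hz hw)
  rw [div_prod_prod_expTransform_eq_exp h1b hrz hrB hrw hrB, ← setIntegral_congr_fun
    h1o.measurableSet fun ζ hζ => normSq_deriv_smul_inv_eval_div_eval_sub_mul_conj (hB ζ hζ)
      (hP ζ hζ z hz) (hP ζ hζ w hw), harea, expTransform, ← Complex.exp_nat_mul, nsmul_eq_mul]
  congr 1
  ring

open scoped Classical in
/-- Behaviour of the exponential transform under a `p`-valent proper rational map
`F = A/B : Ω₁ → Ω₂`: `E_{Ω₂}(z,w)^p = E_{Ω₁}(D_z, D_w)` where `D_u` is the divisor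
of `F − u`, i.e. `roots(A − uB) − roots(B)`. -/
theorem expTransform_rational_map (Ω₁ Ω₂ : Set ℂ)
    (h1o : IsOpen Ω₁) (h1b : Bornology.IsBounded Ω₁)
    (h2o : IsOpen Ω₂) (h2b : Bornology.IsBounded Ω₂)
    (A B : Polynomial ℂ) (hcop : IsCoprime A B) (hB : B ≠ 0)
    (hdeg : A.natDegree ≤ B.natDegree)
    (p : ℕ) (hp : 1 ≤ p)
    (hmap : ∀ ζ ∈ Ω₁, B.eval ζ ≠ 0 ∧ A.eval ζ / B.eval ζ ∈ Ω₂)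
    (hvalent : ∀ᵐ u ∂(volume.restrict Ω₂),
      Multiset.card (Multiset.filter (fun x => x ∈ Ω₁) (A - Polynomial.C u * B).roots) = p)
    (z w : ℂ) (hz : z ∉ closure Ω₂) (hw : w ∉ closure Ω₂)
    (hdz : (A - Polynomial.C z * B).natDegree = B.natDegree)
    (hdw : (A - Polynomial.C w * B).natDegree = B.natDegree)
    (hrz : ∀ α ∈ (A - Polynomial.C z * B).roots, α ∉ closure Ω₁)
    (hrw : ∀ γ ∈ (A - Polynomial.C w * B).roots, γ ∉ closure Ω₁)
    (hrB : ∀ β ∈ B.roots, β ∉ closure Ω₁) :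
    expTransform Ω₂ z w ^ p =
      ((((A - Polynomial.C z * B).roots.map (fun α =>
            ((A - Polynomial.C w * B).roots.map (fun γ => expTransform Ω₁ α γ)).prod)).prod *
        (B.roots.map (fun β =>
            (B.roots.map (fun δ => expTransform Ω₁ β δ)).prod)).prod) /
      ((((A - Polynomial.C z * B).roots.map (fun α =>
            (B.roots.map (fun δ => expTransform Ω₁ α δ)).prod)).prod) *
        (B.roots.map (fun β =>
            ((A - Polynomial.C w * B).roots.map (fun γ => expTransform Ω₁ β γ)).prod)).prod)) :=
  expTransform_rational_map_general Ω₁ Ω₂ h1o h1b h2o h2b A B p hmap hvalent z w hz hw hrz hrw hrB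
end

section
/- Let Ω ⊆ ℂ be a bounded open set and let z ∈ ℂ∖closure(Ω). Then lim_{|w|→∞} conj(w) · (1 − E_Ω(z,w)) = K_Ω(z), where K_Ω(z) = −(1/π) ∫_Ω 1/(ζ−z) dA(ζ) is the Cauchy transform of Ω. In particular E_Ω(z,w) = 1 − K_Ω(z)/conj(w) + O(1/|w|²) as w → ∞ with z fixed. -/
open MeasureTheory Asymptotics

/-- The Cauchy transform `K_Ω(z) = −(1/π) ∫_Ω 1/(ζ−z) dA(ζ)`. -/
noncomputable def cauchyTransform (Ω : Set ℂ) (z : ℂ) : ℂ :=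
  -(1 / (Real.pi : ℂ)) * ∫ ζ in Ω, (ζ - z)⁻¹

/-! With `F(w) = -(1/π) ∫_Ω (ζ - z)⁻¹ conj(ζ - w)⁻¹ dA` we have `E_Ω(z,w) = exp F(w)`. The identity
`1/(conj ζ - conj w) = (conj ζ/(conj ζ - conj w) - 1)/conj w`, integrated against the function
`(ζ - z)⁻¹`, which is bounded on `Ω` because `z ∉ closure Ω`, gives `F(w) = -K_Ω(z)/w̄ + O(|w|⁻²)`:
on a bounded set, `∫ g(ζ)/conj(ζ - w)` is `O(|w|⁻¹)` for every integrable `g`. Hence `F = O(|w|⁻¹)`,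
`exp F = 1 + F + O(|F|²) = 1 - K_Ω(z)/w̄ + O(|w|⁻²)`, and multiplying by `w̄` gives the limit. -/

open Filter Topology Bornology ComplexConjugate

lemma mul_inv_sub_eq_div {K : Type*} [Field K] (a : K) {b c : K} (hbc : b ≠ c) (hc : c ≠ 0) :
    a * (b - c)⁻¹ = (a * b * (b - c)⁻¹ - a) / c := by
  field_simp [sub_ne_zero.2 hbc]
  ring

lemma Complex.isBigO_exp_sub_one_sub_sq {α : Type*} {l : Filter α} {F : α → ℂ}
    (hF : Tendsto F l (𝓝 0)) :
    (fun x => Complex.exp (F x) - 1 - F x) =O[l] fun x => F x ^ 2 := by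
  simpa [Function.comp_def, Finset.sum_range_succ, sub_sub] using
    (Complex.exp_sub_sum_range_isBigO_pow 2).comp_tendsto hF

lemma tendsto_conj_mul_of_isBigO_inv_sq {u : ℂ → ℂ}
    (hu : u =O[cobounded ℂ] fun w => (‖w‖ ^ 2)⁻¹) :
    Tendsto (fun w => conj w * u w) (cobounded ℂ) (𝓝 0) := by
  have hconj : (fun w => conj w) =O[cobounded ℂ] fun w => ‖w‖ :=
    isBigO_of_le _ fun w => by simp
  have hnorm : (fun w : ℂ => ‖w‖ * (‖w‖ ^ 2)⁻¹) = fun w => ‖w‖⁻¹ := by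
    ext w
    rw [sq, ← div_eq_mul_inv, div_self_mul_self']
  refine (hconj.mul hu).trans_tendsto ?_
  rw [hnorm]
  exact tendsto_norm_cobounded_atTop.inv_tendsto_atTop

lemma integrableOn_sub_inv_of_notMem_closure {μ : Measure ℂ} {s : Set ℂ} {z : ℂ}
    (hs : MeasurableSet s) (hμs : μ s ≠ ⊤) (hz : z ∉ closure s) :
    IntegrableOn (fun ζ => (ζ - z)⁻¹) s μ := by
  obtain ⟨δ, hδ, hδs⟩ : ∃ δ > 0, ∀ ζ ∈ s, δ ≤ ‖ζ - z‖ := by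
    simpa [Metric.mem_closure_iff, dist_eq_norm, norm_sub_rev] using hz
  refine Measure.integrableOn_of_bounded (M := δ⁻¹) hμs (by fun_prop)
    ((ae_restrict_iff' hs).2 (.of_forall fun ζ hζ => ?_))
  rw [norm_inv]
  exact inv_anti₀ hδ (hδs ζ hζ)

lemma Bornology.IsBounded.eventually_norm_conj_sub_inv_le {s : Set ℂ} (hs : IsBounded s) :
    ∀ᶠ w in cobounded ℂ, ∀ ζ ∈ s, ‖(conj (ζ - w))⁻¹‖ ≤ 2 * ‖w‖⁻¹ := by
  obtain ⟨R, hR⟩ := hs.exists_norm_le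
  filter_upwards [tendsto_norm_cobounded_atTop.eventually_ge_atTop (2 * R + 1)] with w hw ζ hζ
  have hR0 : 0 ≤ R := (norm_nonneg ζ).trans (hR ζ hζ)
  have hζw : ‖w‖ / 2 ≤ ‖ζ - w‖ := by
    have := norm_sub_norm_le w ζ
    rw [norm_sub_rev] at this
    linarith [hR ζ hζ]
  rw [norm_inv, Complex.norm_conj]
  calc ‖ζ - w‖⁻¹ ≤ (‖w‖ / 2)⁻¹ := inv_anti₀ (by linarith) hζw
    _ = 2 * ‖w‖⁻¹ := by rw [inv_div, div_eq_mul_inv]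

namespace MeasureTheory.IntegrableOn

variable {μ : Measure ℂ} {s : Set ℂ} {f : ℂ → ℂ}

lemma mul_conj (hf : IntegrableOn f s μ) (hs : MeasurableSet s) (hsb : IsBounded s) :
    IntegrableOn (fun ζ => f ζ * conj ζ) s μ := by
  obtain ⟨R, hR⟩ := hsb.exists_norm_le
  exact Integrable.mul_bdd hf (by fun_prop)
    ((ae_restrict_iff' hs).2 (.of_forall fun ζ hζ => by simpa using hR ζ hζ))

lemma eventually_integrableOn_mul_conj_sub_inv (hf : IntegrableOn f s μ) (hs : MeasurableSet s)
    (hsb : IsBounded s) :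
    ∀ᶠ w in cobounded ℂ, IntegrableOn (fun ζ => f ζ * (conj (ζ - w))⁻¹) s μ := by
  filter_upwards [hsb.eventually_norm_conj_sub_inv_le] with w hw
  exact Integrable.mul_bdd hf (by fun_prop) ((ae_restrict_iff' hs).2 (.of_forall hw))

lemma isBigO_integral_mul_conj_sub_inv (hf : IntegrableOn f s μ) (hs : MeasurableSet s)
    (hsb : IsBounded s) :
    (fun w => ∫ ζ in s, f ζ * (conj (ζ - w))⁻¹ ∂μ) =O[cobounded ℂ] fun w => ‖w‖⁻¹ := by
  refine .of_bound (2 * ∫ ζ in s, ‖f ζ‖ ∂μ) ?_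
  filter_upwards [hsb.eventually_norm_conj_sub_inv_le] with w hw
  have hbound : ∀ᵐ ζ ∂μ.restrict s, ‖f ζ * (conj (ζ - w))⁻¹‖ ≤ ‖f ζ‖ * (2 * ‖w‖⁻¹) :=
    (ae_restrict_iff' hs).2 (.of_forall fun ζ hζ => by
      rw [norm_mul]
      exact mul_le_mul_of_nonneg_left (hw ζ hζ) (norm_nonneg _))
  rw [Real.norm_of_nonneg (inv_nonneg.2 (norm_nonneg w))]
  calc ‖∫ ζ in s, f ζ * (conj (ζ - w))⁻¹ ∂μ‖ ≤ ∫ ζ in s, ‖f ζ‖ * (2 * ‖w‖⁻¹) ∂μ :=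
        norm_integral_le_of_norm_le (hf.norm.mul_const _) hbound
    _ = 2 * (∫ ζ in s, ‖f ζ‖ ∂μ) * ‖w‖⁻¹ := by rw [integral_mul_const]; ring

lemma eventually_integral_mul_conj_sub_inv_eq (hf : IntegrableOn f s μ) (hs : MeasurableSet s)
    (hsb : IsBounded s) :
    ∀ᶠ w in cobounded ℂ, ∫ ζ in s, f ζ * (conj (ζ - w))⁻¹ ∂μ =
      ((∫ ζ in s, f ζ * conj ζ * (conj (ζ - w))⁻¹ ∂μ) - ∫ ζ in s, f ζ ∂μ) / conj w := by
  filter_upwards [(hf.mul_conj hs hsb).eventually_integrableOn_mul_conj_sub_inv hs hsb,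
    (hsb.insert 0).compl] with w hint hw
  obtain ⟨hw0, hws⟩ : w ≠ 0 ∧ w ∉ s := by simpa [not_or] using hw
  rw [← integral_sub hint hf, ← integral_div]
  refine setIntegral_congr_fun hs fun ζ hζ => ?_
  rw [map_sub]
  exact mul_inv_sub_eq_div _ ((RingHom.injective _).ne (ne_of_mem_of_not_mem hζ hws))
    ((map_ne_zero _).2 hw0)

lemma isBigO_integral_mul_conj_sub_inv_add (hf : IntegrableOn f s μ) (hs : MeasurableSet s)
    (hsb : IsBounded s) :
    (fun w => (∫ ζ in s, f ζ * (conj (ζ - w))⁻¹ ∂μ) + (∫ ζ in s, f ζ ∂μ) / conj w)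
      =O[cobounded ℂ] fun w => (‖w‖ ^ 2)⁻¹ := by
  have hinv : (fun w => (conj w)⁻¹) =O[cobounded ℂ] fun w => ‖w‖⁻¹ :=
    isBigO_of_le _ fun w => by simp
  refine (((hf.mul_conj hs hsb).isBigO_integral_mul_conj_sub_inv hs hsb).mul hinv).congr' ?_
    (.of_forall fun w => by simp only [sq, mul_inv])
  filter_upwards [hf.eventually_integral_mul_conj_sub_inv_eq hs hsb] with w hw
  rw [hw]
  ring

end MeasureTheory.IntegrableOn

/-- Asymptotics of the exponential transform at infinity:
`lim_{|w|→∞} w̄ (1 − E_Ω(z,w)) = K_Ω(z)`, and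
`E_Ω(z,w) = 1 − K_Ω(z)/w̄ + O(1/|w|²)` as `w → ∞`. -/
theorem expTransform_cauchy_asymptotics (Ω : Set ℂ) (ho : IsOpen Ω)
    (hb : Bornology.IsBounded Ω) (z : ℂ) (hz : z ∉ closure Ω) :
    Filter.Tendsto (fun w : ℂ => (starRingEnd ℂ) w * (1 - expTransform Ω z w))
      (Bornology.cobounded ℂ) (nhds (cauchyTransform Ω z)) ∧
    (fun w : ℂ => expTransform Ω z w - (1 - cauchyTransform Ω z / (starRingEnd ℂ) w))
      =O[Bornology.cobounded ℂ] (fun w : ℂ => (‖w‖ ^ 2)⁻¹) := by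
  set f : ℂ → ℂ := fun ζ => (ζ - z)⁻¹
  have hs : MeasurableSet Ω := ho.measurableSet
  have hf : IntegrableOn f Ω := integrableOn_sub_inv_of_notMem_closure hs hb.measure_lt_top.ne hz
  set F : ℂ → ℂ := fun w => -(1 / (Real.pi : ℂ)) * ∫ ζ in Ω, f ζ * (conj (ζ - w))⁻¹
  have hE : ∀ w, expTransform Ω z w = Complex.exp (F w) := fun w => by
    simp only [expTransform, F, f, mul_inv]
  have hF : F =O[cobounded ℂ] fun w => ‖w‖⁻¹ :=
    (hf.isBigO_integral_mul_conj_sub_inv hs hb).const_mul_left _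
  have hFK : (fun w => F w + cauchyTransform Ω z / conj w) =O[cobounded ℂ]
      fun w => (‖w‖ ^ 2)⁻¹ :=
    ((hf.isBigO_integral_mul_conj_sub_inv_add hs hb).const_mul_left
      (-(1 / (Real.pi : ℂ)))).congr_left fun w => by
      simp only [F, f, cauchyTransform]
      ring
  have hexp : (fun w => Complex.exp (F w) - 1 - F w) =O[cobounded ℂ] fun w => (‖w‖ ^ 2)⁻¹ :=
    (Complex.isBigO_exp_sub_one_sub_sq
      (hF.trans_tendsto tendsto_norm_cobounded_atTop.inv_tendsto_atTop)).trans
      ((hF.pow 2).congr_right fun w => inv_pow _ _)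
  have hrem : (fun w => expTransform Ω z w - (1 - cauchyTransform Ω z / conj w))
      =O[cobounded ℂ] fun w => (‖w‖ ^ 2)⁻¹ :=
    (hexp.add hFK).congr_left fun w => by rw [hE]; ring
  refine ⟨?_, hrem⟩
  have hlim := (tendsto_const_nhds (x := cauchyTransform Ω z)).sub
    (tendsto_conj_mul_of_isBigO_inv_sq hrem)
  rw [sub_zero] at hlim
  refine hlim.congr' ?_
  filter_upwards [(isBounded_singleton (x := (0 : ℂ))).compl] with w hw
  have hw0 : conj w ≠ 0 := (map_ne_zero _).2 hw
  field_simp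
  ring
end
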